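/- arXiv:2508.21661 — 8 statements merged into one kernel-verified Lean document; each statement's English description precedes it below -/
import Mathlib

section
/- Let V be a real inner product space of finite dimension n ≥ 4 and let R be an algebraic curvature tensor on V. If for every orthonormal four-frame {e₁,e₂,e₃,e₄} in V one has R(e₁,e₃,e₁,e₃) + R(e₁,e₄,e₁,e₄) + R(e₂,e₃,e₂,e₃) + R(e₂,e₄,e₂,e₄) > (1/2)·(R(e₁,e₂,e₁,e₂) + R(e₃,e₄,e₃,e₄)), then R has positive isotropic curvature, i.e. for every orthonormal four-frame {e₁,e₂,e₃,e₄} in V one has R(e₁,e₃,e₁,e₃) + R(e₁,e₄,e₁,e₄) + R(e₂,e₃,e₂,e₃) + R(e₂,e₄,e₂,e₄) − 2·R(e₁,e₂,e₃,e₄) > 0. -/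
/-!
Apply the hypothesis to the frame `(e₁, e₂, e₃, e₄)` and to the two frames obtained from it by a
rotation through `π/4` in the planes `e₁e₃, e₂e₄`, resp. `e₁e₄, e₂e₃`; up to the factor `√2` these are
`(e₁ + e₃, e₂ + e₄, e₁ - e₃, e₂ - e₄)` and `(e₁ + e₄, e₂ - e₃, e₁ - e₄, e₂ + e₃)`. Expanding by
multilinearity and reducing with the symmetries of `R` and the Bianchi identity, four times the first
excess plus the two others is exactly nine times the isotropic curvature of `(e₁, e₂, e₃, e₄)`.
-/

open scoped RealInnerProductSpace

variable {V : Type*} [NormedAddCommGroup V] [InnerProductSpace ℝ V]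

/-- An algebraic curvature tensor on a real inner product space `V`:
an `ℝ`-multilinear map `V × V × V × V → ℝ` with the standard symmetries and
the first Bianchi identity. -/
def IsCurvatureTensor (R : V →ₗ[ℝ] V →ₗ[ℝ] V →ₗ[ℝ] V →ₗ[ℝ] ℝ) : Prop :=
  (∀ X Y Z W : V, R X Y Z W = - R Y X Z W) ∧
  (∀ X Y Z W : V, R X Y Z W = - R X Y W Z) ∧
  (∀ X Y Z W : V, R X Y Z W = R Z W X Y) ∧
  (∀ X Y Z W : V, R X Y Z W + R X Z W Y + R X W Y Z = 0)

/-- An orthonormal four-frame: four pairwise orthogonal unit vectors. -/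
def OrthonormalFrame4 (e₁ e₂ e₃ e₄ : V) : Prop :=
  ‖e₁‖ = 1 ∧ ‖e₂‖ = 1 ∧ ‖e₃‖ = 1 ∧ ‖e₄‖ = 1 ∧
  ⟪e₁, e₂⟫ = 0 ∧ ⟪e₁, e₃⟫ = 0 ∧ ⟪e₁, e₄⟫ = 0 ∧
  ⟪e₂, e₃⟫ = 0 ∧ ⟪e₂, e₄⟫ = 0 ∧ ⟪e₃, e₄⟫ = 0

/- `map_sub` cannot rewrite the first argument: instance search does not find the
`AddCommGroup` structure on a triply nested space of linear maps. -/
theorem LinearMap.map_sub_apply₃ {𝕜 M : Type*} [CommRing 𝕜] [AddCommGroup M] [Module 𝕜 M]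
    (R : M →ₗ[𝕜] M →ₗ[𝕜] M →ₗ[𝕜] M →ₗ[𝕜] 𝕜) (x y z w u : M) :
    R (x - y) z w u = R x z w u - R y z w u := by
  rw [eq_sub_iff_add_eq, ← LinearMap.add_apply, ← LinearMap.add_apply, ← LinearMap.add_apply,
    ← map_add, sub_add_cancel]

noncomputable section CurvatureTensor

variable (R : V →ₗ[ℝ] V →ₗ[ℝ] V →ₗ[ℝ] V →ₗ[ℝ] ℝ)

def frameExcess (e₁ e₂ e₃ e₄ : V) : ℝ :=
  R e₁ e₃ e₁ e₃ + R e₁ e₄ e₁ e₄ + R e₂ e₃ e₂ e₃ + R e₂ e₄ e₂ e₄ -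
    (1 / 2) * (R e₁ e₂ e₁ e₂ + R e₃ e₄ e₃ e₄)

def isotropicCurvature (e₁ e₂ e₃ e₄ : V) : ℝ :=
  R e₁ e₃ e₁ e₃ + R e₁ e₄ e₁ e₄ + R e₂ e₃ e₂ e₃ + R e₂ e₄ e₂ e₄ - 2 * R e₁ e₂ e₃ e₄

theorem frameExcess_smul (c : ℝ) (e₁ e₂ e₃ e₄ : V) :
    frameExcess R (c • e₁) (c • e₂) (c • e₃) (c • e₄) = c ^ 4 * frameExcess R e₁ e₂ e₃ e₄ := by
  simp only [frameExcess, map_smul, LinearMap.smul_apply, smul_eq_mul]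
  ring

end CurvatureTensor

namespace IsCurvatureTensor

variable {R : V →ₗ[ℝ] V →ₗ[ℝ] V →ₗ[ℝ] V →ₗ[ℝ] ℝ} (hR : IsCurvatureTensor R)
include hR

theorem apply_self_left (x z w : V) : R x x z w = 0 := by
  linarith [hR.1 x x z w]

theorem apply_self_right (x y z : V) : R x y z z = 0 := by
  linarith [hR.2.1 x y z z]

theorem sectional_comm (x y : V) : R y x y x = R x y x y := by
  rw [hR.1, hR.2.1, neg_neg]

theorem sectional_add_sub (x y : V) :
    R (x + y) (x - y) (x + y) (x - y) = 4 * R x y x y := by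
  simp only [map_add, map_sub, LinearMap.add_apply, LinearMap.sub_apply,
    hR.apply_self_left, hR.apply_self_right]
  linarith [hR.sectional_comm x y, hR.1 y x x y, hR.2.1 x y y x]

/- Of the 32 terms of the expansion only those with an even number of arguments `y, w` survive;
these pair off by `R X Y Z W = R Z W X Y`. -/
theorem sectional_add_add_add_sub_sub (x y z w : V) :
    R (x + y) (z + w) (x + y) (z + w) + R (x - y) (z - w) (x - y) (z - w) =
      2 * (R x z x z + R x w x w + R y z y z + R y w y w) + 4 * (R x z y w + R x w y z) := by
  simp only [map_add, map_sub, LinearMap.add_apply, LinearMap.sub_apply,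
    LinearMap.map_sub_apply₃]
  linarith [hR.2.2.1 y w x z, hR.2.2.1 y z x w]

theorem sectional_add_sub_add_sub_add (x y z w : V) :
    R (x + y) (z - w) (x + y) (z - w) + R (x - y) (z + w) (x - y) (z + w) =
      2 * (R x z x z + R x w x w + R y z y z + R y w y w) - 4 * (R x z y w + R x w y z) := by
  simp only [map_add, map_sub, LinearMap.add_apply, LinearMap.sub_apply,
    LinearMap.map_sub_apply₃]
  linarith [hR.2.2.1 y w x z, hR.2.2.1 y z x w]

theorem frameExcess_add_sub (x y z w : V) :
    frameExcess R (x + y) (z + w) (x - y) (z - w) =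
      4 * (R x y x y + R z w z w) + (R x z x z + R x w x w + R y z y z + R y w y w) -
        6 * (R x z y w + R x w y z) := by
  have hxy := hR.sectional_add_sub x y
  have hzw := hR.sectional_add_sub z w
  have hcomm := hR.sectional_comm (x - y) (z + w)
  have hplus := hR.sectional_add_add_add_sub_sub x y z w
  have hminus := hR.sectional_add_sub_add_sub_add x y z w
  unfold frameExcess
  linarith

theorem nine_mul_isotropicCurvature (e₁ e₂ e₃ e₄ : V) :
    9 * isotropicCurvature R e₁ e₂ e₃ e₄ =
      4 * frameExcess R e₁ e₂ e₃ e₄ + frameExcess R (e₁ + e₃) (e₂ + e₄) (e₁ - e₃) (e₂ - e₄) +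
        frameExcess R (e₁ + e₄) (e₂ - e₃) (e₁ - e₄) (e₂ + e₃) := by
  have hA := hR.frameExcess_add_sub e₁ e₃ e₂ e₄
  have hB := hR.frameExcess_add_sub e₁ e₄ e₂ (-e₃)
  simp only [← sub_eq_add_neg, sub_neg_eq_add, map_neg, LinearMap.neg_apply, neg_neg] at hB
  rw [hA, hB]
  unfold isotropicCurvature frameExcess
  linarith [hR.sectional_comm e₂ e₃, hR.sectional_comm e₂ e₄, hR.sectional_comm e₃ e₄,
    hR.2.1 e₁ e₂ e₄ e₃, hR.2.1 e₁ e₄ e₃ e₂, hR.2.2.2 e₁ e₂ e₃ e₄]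

end IsCurvatureTensor

theorem norm_eq_one_iff_real_inner_self {x : V} : ‖x‖ = 1 ↔ ⟪x, x⟫ = 1 := by
  rw [real_inner_self_eq_norm_sq, pow_eq_one_iff_of_nonneg (norm_nonneg x) two_ne_zero]

theorem orthonormalFrame4_iff_inner {e₁ e₂ e₃ e₄ : V} :
    OrthonormalFrame4 e₁ e₂ e₃ e₄ ↔
      ⟪e₁, e₁⟫ = 1 ∧ ⟪e₂, e₂⟫ = 1 ∧ ⟪e₃, e₃⟫ = 1 ∧ ⟪e₄, e₄⟫ = 1 ∧
      ⟪e₁, e₂⟫ = 0 ∧ ⟪e₁, e₃⟫ = 0 ∧ ⟪e₁, e₄⟫ = 0 ∧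
      ⟪e₂, e₃⟫ = 0 ∧ ⟪e₂, e₄⟫ = 0 ∧ ⟪e₃, e₄⟫ = 0 := by
  simp only [OrthonormalFrame4, norm_eq_one_iff_real_inner_self]

namespace OrthonormalFrame4

variable {e₁ e₂ e₃ e₄ : V} (h : OrthonormalFrame4 e₁ e₂ e₃ e₄)
include h

theorem quarterTurn : OrthonormalFrame4 e₁ e₂ e₄ (-e₃) := by
  obtain ⟨h₁, h₂, h₃, h₄, h₁₂, h₁₃, h₁₄, h₂₃, h₂₄, h₃₄⟩ := h
  refine ⟨h₁, h₂, h₄, by rwa [norm_neg], h₁₂, h₁₄, ?_, h₂₄, ?_, ?_⟩ <;>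
    simp only [inner_neg_right, real_inner_comm e₃ e₄, h₁₃, h₂₃, h₃₄, neg_zero]

theorem rotate :
    OrthonormalFrame4 ((√2)⁻¹ • (e₁ + e₃)) ((√2)⁻¹ • (e₂ + e₄)) ((√2)⁻¹ • (e₁ - e₃))
      ((√2)⁻¹ • (e₂ - e₄)) := by
  rw [orthonormalFrame4_iff_inner] at h ⊢
  obtain ⟨h₁, h₂, h₃, h₄, h₁₂, h₁₃, h₁₄, h₂₃, h₂₄, h₃₄⟩ := h
  have hsq : (√2)⁻¹ * (√2)⁻¹ = (1 / 2 : ℝ) := by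
    rw [← mul_inv, Real.mul_self_sqrt zero_le_two, one_div]
  refine ⟨?_, ?_, ?_, ?_, ?_, ?_, ?_, ?_, ?_, ?_⟩ <;>
    simp only [real_inner_smul_left, real_inner_smul_right, inner_add_left, inner_add_right,
      inner_sub_left, inner_sub_right, real_inner_comm e₁ e₂, real_inner_comm e₁ e₃,
      real_inner_comm e₁ e₄, real_inner_comm e₂ e₃, real_inner_comm e₂ e₄, real_inner_comm e₃ e₄,
      h₁, h₂, h₃, h₄, h₁₂, h₁₃, h₁₄, h₂₃, h₂₄, h₃₄] <;>
    linarith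

end OrthonormalFrame4

theorem stmt_0_general {V : Type*} [NormedAddCommGroup V] [InnerProductSpace ℝ V]
    (R : V →ₗ[ℝ] V →ₗ[ℝ] V →ₗ[ℝ] V →ₗ[ℝ] ℝ) (hR : IsCurvatureTensor R)
    (hyp : ∀ e₁ e₂ e₃ e₄ : V, OrthonormalFrame4 e₁ e₂ e₃ e₄ →
      R e₁ e₃ e₁ e₃ + R e₁ e₄ e₁ e₄ + R e₂ e₃ e₂ e₃ + R e₂ e₄ e₂ e₄ >
        (1 / 2) * (R e₁ e₂ e₁ e₂ + R e₃ e₄ e₃ e₄)) :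
    ∀ e₁ e₂ e₃ e₄ : V, OrthonormalFrame4 e₁ e₂ e₃ e₄ →
      R e₁ e₃ e₁ e₃ + R e₁ e₄ e₁ e₄ + R e₂ e₃ e₂ e₃ + R e₂ e₄ e₂ e₄
        - 2 * R e₁ e₂ e₃ e₄ > 0 := by
  have hpos : ∀ f₁ f₂ f₃ f₄ : V, OrthonormalFrame4 f₁ f₂ f₃ f₄ →
      0 < frameExcess R f₁ f₂ f₃ f₄ :=
    fun f₁ f₂ f₃ f₄ hf ↦ sub_pos.2 (hyp f₁ f₂ f₃ f₄ hf)
  have hrot : ∀ f₁ f₂ f₃ f₄ : V, OrthonormalFrame4 f₁ f₂ f₃ f₄ →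
      0 < frameExcess R (f₁ + f₃) (f₂ + f₄) (f₁ - f₃) (f₂ - f₄) := by
    intro f₁ f₂ f₃ f₄ hf
    have h := hpos _ _ _ _ hf.rotate
    rw [frameExcess_smul] at h
    exact pos_of_mul_pos_right h (by positivity)
  intro e₁ e₂ e₃ e₄ he
  have hA := hrot _ _ _ _ he
  have hB := hrot _ _ _ _ he.quarterTurn
  rw [← sub_eq_add_neg, sub_neg_eq_add] at hB
  have h9 := hR.nine_mul_isotropicCurvature e₁ e₂ e₃ e₄
  change 0 < isotropicCurvature R e₁ e₂ e₃ e₄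
  linarith [hpos _ _ _ _ he]

theorem stmt_0 {V : Type*} [NormedAddCommGroup V] [InnerProductSpace ℝ V]
    [FiniteDimensional ℝ V] (hdim : 4 ≤ Module.finrank ℝ V)
    (R : V →ₗ[ℝ] V →ₗ[ℝ] V →ₗ[ℝ] V →ₗ[ℝ] ℝ) (hR : IsCurvatureTensor R)
    (hyp : ∀ e₁ e₂ e₃ e₄ : V, OrthonormalFrame4 e₁ e₂ e₃ e₄ →
      R e₁ e₃ e₁ e₃ + R e₁ e₄ e₁ e₄ + R e₂ e₃ e₂ e₃ + R e₂ e₄ e₂ e₄ >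
        (1 / 2) * (R e₁ e₂ e₁ e₂ + R e₃ e₄ e₃ e₄)) :
    ∀ e₁ e₂ e₃ e₄ : V, OrthonormalFrame4 e₁ e₂ e₃ e₄ →
      R e₁ e₃ e₁ e₃ + R e₁ e₄ e₁ e₄ + R e₂ e₃ e₂ e₃ + R e₂ e₄ e₂ e₄
        - 2 * R e₁ e₂ e₃ e₄ > 0 :=
  stmt_0_general R hR hyp
end

section
/- Let V be a real inner product space of finite dimension n ≥ 4 and let R be an algebraic curvature tensor on V. Suppose R has (1/4)-pinched sectional curvature, meaning that for all orthonormal pairs {x,y} and {u,v} of vectors in V one has R(x,y,x,y) > (1/4)·R(u,v,u,v). Then for every orthonormal four-frame {e₁,e₂,e₃,e₄} in V one has R(e₁,e₃,e₁,e₃) + R(e₁,e₄,e₁,e₄) + R(e₂,e₃,e₂,e₃) + R(e₂,e₄,e₂,e₄) > (1/2)·(R(e₁,e₂,e₁,e₂) + R(e₃,e₄,e₃,e₄)). -/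
open scoped RealInnerProductSpace

variable {V : Type*} [NormedAddCommGroup V] [InnerProductSpace ℝ V]

theorem stmt_2 {V : Type*} [NormedAddCommGroup V] [InnerProductSpace ℝ V]
    [FiniteDimensional ℝ V] (hdim : 4 ≤ Module.finrank ℝ V)
    (R : V →ₗ[ℝ] V →ₗ[ℝ] V →ₗ[ℝ] V →ₗ[ℝ] ℝ) (hR : IsCurvatureTensor R)
    (hpinch : ∀ x y u v : V, ‖x‖ = 1 → ‖y‖ = 1 → ⟪x, y⟫ = 0 →
      ‖u‖ = 1 → ‖v‖ = 1 → ⟪u, v⟫ = 0 →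
      R x y x y > (1 / 4) * R u v u v) :
    ∀ e₁ e₂ e₃ e₄ : V, OrthonormalFrame4 e₁ e₂ e₃ e₄ →
      R e₁ e₃ e₁ e₃ + R e₁ e₄ e₁ e₄ + R e₂ e₃ e₂ e₃ + R e₂ e₄ e₂ e₄ >
        (1 / 2) * (R e₁ e₂ e₁ e₂ + R e₃ e₄ e₃ e₄) := by
  rintro e₁ e₂ e₃ e₄ ⟨h1, h2, h3, h4, h12, h13, h14, h23, h24, h34⟩
  have A := hpinch e₁ e₃ e₁ e₂ h1 h3 h13 h1 h2 h12
  have B := hpinch e₂ e₄ e₁ e₂ h2 h4 h24 h1 h2 h12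
  have C := hpinch e₁ e₄ e₃ e₄ h1 h4 h14 h3 h4 h34
  have D := hpinch e₂ e₃ e₃ e₄ h2 h3 h23 h3 h4 h34
  linarith
end

section
/- Let V be a real inner product space of finite dimension n ≥ 4 and let R be an algebraic curvature tensor on V. Suppose R has (1/4)-pinched flag curvature, meaning that for every unit vector e and all unit vectors u, v each orthogonal to e one has R(e,u,e,u) > (1/4)·R(e,v,e,v). Then for every orthonormal four-frame {e₁,e₂,e₃,e₄} in V one has R(e₁,e₃,e₁,e₃) + R(e₁,e₄,e₁,e₄) + R(e₂,e₃,e₂,e₃) + R(e₂,e₄,e₂,e₄) > (1/2)·(R(e₁,e₂,e₁,e₂) + R(e₃,e₄,e₃,e₄)). -/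
open scoped RealInnerProductSpace

variable {V : Type*} [NormedAddCommGroup V] [InnerProductSpace ℝ V]

theorem stmt_3 {V : Type*} [NormedAddCommGroup V] [InnerProductSpace ℝ V]
    [FiniteDimensional ℝ V] (hdim : 4 ≤ Module.finrank ℝ V)
    (R : V →ₗ[ℝ] V →ₗ[ℝ] V →ₗ[ℝ] V →ₗ[ℝ] ℝ) (hR : IsCurvatureTensor R)
    (hpinch : ∀ e u v : V, ‖e‖ = 1 → ‖u‖ = 1 → ‖v‖ = 1 →
      ⟪e, u⟫ = 0 → ⟪e, v⟫ = 0 →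
      R e u e u > (1 / 4) * R e v e v) :
    ∀ e₁ e₂ e₃ e₄ : V, OrthonormalFrame4 e₁ e₂ e₃ e₄ →
      R e₁ e₃ e₁ e₃ + R e₁ e₄ e₁ e₄ + R e₂ e₃ e₂ e₃ + R e₂ e₄ e₂ e₄ >
        (1 / 2) * (R e₁ e₂ e₁ e₂ + R e₃ e₄ e₃ e₄) := by
  rintro e₁ e₂ e₃ e₄ ⟨h1, h2, h3, h4, h12, h13, h14, h23, h24, h34⟩
  obtain ⟨ha, hb, hc, -⟩ := hR
  have h21 : ⟪e₂, e₁⟫ = 0 := by rw [real_inner_comm]; exact h12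
  have h31 : ⟪e₃, e₁⟫ = 0 := by rw [real_inner_comm]; exact h13
  have h41 : ⟪e₄, e₁⟫ = 0 := by rw [real_inner_comm]; exact h14
  have h32 : ⟪e₃, e₂⟫ = 0 := by rw [real_inner_comm]; exact h23
  have h42 : ⟪e₄, e₂⟫ = 0 := by rw [real_inner_comm]; exact h24
  have h43 : ⟪e₄, e₃⟫ = 0 := by rw [real_inner_comm]; exact h34
  have sym : ∀ X Y : V, R Y X Y X = R X Y X Y := by
    intro X Y
    rw [ha Y X Y X, hb X Y Y X]; ring
  -- pole e₁
  have p1 := hpinch e₁ e₃ e₂ h1 h3 h2 h13 h12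
  have p2 := hpinch e₁ e₄ e₂ h1 h4 h2 h14 h12
  -- pole e₂
  have p3 := hpinch e₂ e₃ e₁ h2 h3 h1 h23 h21
  have p4 := hpinch e₂ e₄ e₁ h2 h4 h1 h24 h21
  -- pole e₃
  have p5 := hpinch e₃ e₁ e₄ h3 h1 h4 h31 h34
  have p6 := hpinch e₃ e₂ e₄ h3 h2 h4 h32 h34
  -- pole e₄
  have p7 := hpinch e₄ e₁ e₃ h4 h1 h3 h41 h43
  have p8 := hpinch e₄ e₂ e₃ h4 h2 h3 h42 h43
  rw [sym e₁ e₂] at p3 p4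
  rw [sym e₁ e₃] at p5
  rw [sym e₂ e₃] at p6
  rw [sym e₁ e₄, sym e₃ e₄] at p7
  rw [sym e₂ e₄, sym e₃ e₄] at p8
  linarith
end

section
/- Let V be a real inner product space of finite dimension n ≥ 4, let R be an algebraic curvature tensor on V, let {e₁,…,e_n} be an orthonormal basis of V, and let S = Σ_{i=1}^{n} Σ_{j=1}^{n} R(e_i,e_j,e_i,e_j) be the scalar curvature of R. Let γ < 2 be a real number. If for every orthonormal four-frame {f₁,f₂,f₃,f₄} in V one has R(f₁,f₃,f₁,f₃) + R(f₁,f₄,f₁,f₄) + R(f₂,f₃,f₂,f₃) + R(f₂,f₄,f₂,f₄) > γ·(R(f₁,f₂,f₁,f₂) + R(f₃,f₄,f₃,f₄)), then S > 0. -/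
open scoped RealInnerProductSpace

variable {V : Type*} [NormedAddCommGroup V] [InnerProductSpace ℝ V]

set_option maxHeartbeats 3200000 in
private lemma key_sum {n : ℕ} (hn : 4 ≤ n) (K : Fin n → Fin n → ℝ)
    (hdiag : ∀ i, K i i = 0) (γ : ℝ) (hγ : γ < 2)
    (hA : ∀ i j k l : Fin n, i ≠ j → i ≠ k → i ≠ l → j ≠ k → j ≠ l → k ≠ l →
      γ * (K i j + K k l) < K i k + K i l + K j k + K j l) :
    0 < ∑ i, ∑ j, K i j := by
  classical
  set T : Finset (Fin n × Fin n × Fin n × Fin n) :=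
    Finset.univ.filter fun t => t.1 ≠ t.2.1 ∧ t.1 ≠ t.2.2.1 ∧ t.1 ≠ t.2.2.2 ∧
      t.2.1 ≠ t.2.2.1 ∧ t.2.1 ≠ t.2.2.2 ∧ t.2.2.1 ≠ t.2.2.2 with hT
  have hmem : ∀ t : Fin n × Fin n × Fin n × Fin n, t ∈ T ↔
      (t.1 ≠ t.2.1 ∧ t.1 ≠ t.2.2.1 ∧ t.1 ≠ t.2.2.2 ∧
      t.2.1 ≠ t.2.2.1 ∧ t.2.1 ≠ t.2.2.2 ∧ t.2.2.1 ≠ t.2.2.2) := by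
    intro t; simp [hT]
  -- T is nonempty
  have hTne : T.Nonempty := by
    refine ⟨(⟨0, by omega⟩, ⟨1, by omega⟩, ⟨2, by omega⟩, ⟨3, by omega⟩), ?_⟩
    rw [hmem]
    refine ⟨?_, ?_, ?_, ?_, ?_, ?_⟩ <;> simp [Fin.ext_iff]
  -- the strict sum
  have h1 : 0 < ∑ t ∈ T, ((K t.1 t.2.2.1 + K t.1 t.2.2.2 + K t.2.1 t.2.2.1 + K t.2.1 t.2.2.2)
      - γ * (K t.1 t.2.1 + K t.2.2.1 t.2.2.2)) := by
    refine Finset.sum_pos ?_ hTne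
    intro t ht
    rw [hmem] at ht
    obtain ⟨h12, h13, h14, h23, h24, h34⟩ := ht
    have := hA t.1 t.2.1 t.2.2.1 t.2.2.2 h12 h13 h14 h23 h24 h34
    linarith
  -- bijection lemmas
  have e13 : ∑ t ∈ T, K t.1 t.2.2.1 = ∑ t ∈ T, K t.1 t.2.1 := by
    refine Finset.sum_nbij' (fun t => (t.1, t.2.2.1, t.2.1, t.2.2.2))
      (fun t => (t.1, t.2.2.1, t.2.1, t.2.2.2)) (fun t ht => by rw [hmem] at ht ⊢; tauto)
      (fun t ht => by rw [hmem] at ht ⊢; tauto) (fun t ht => rfl) (fun t ht => rfl)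
      (fun t ht => rfl)
  have e14 : ∑ t ∈ T, K t.1 t.2.2.2 = ∑ t ∈ T, K t.1 t.2.1 := by
    refine Finset.sum_nbij' (fun t => (t.1, t.2.2.2, t.2.1, t.2.2.1))
      (fun t => (t.1, t.2.2.1, t.2.2.2, t.2.1)) (fun t ht => by rw [hmem] at ht ⊢; tauto)
      (fun t ht => by rw [hmem] at ht ⊢; tauto) (fun t ht => rfl) (fun t ht => rfl)
      (fun t ht => rfl)
  have e23 : ∑ t ∈ T, K t.2.1 t.2.2.1 = ∑ t ∈ T, K t.1 t.2.1 := by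
    refine Finset.sum_nbij' (fun t => (t.2.1, t.2.2.1, t.1, t.2.2.2))
      (fun t => (t.2.2.1, t.1, t.2.1, t.2.2.2)) (fun t ht => by rw [hmem] at ht ⊢; tauto)
      (fun t ht => by rw [hmem] at ht ⊢; tauto) (fun t ht => rfl) (fun t ht => rfl)
      (fun t ht => rfl)
  have e24 : ∑ t ∈ T, K t.2.1 t.2.2.2 = ∑ t ∈ T, K t.1 t.2.1 := by
    refine Finset.sum_nbij' (fun t => (t.2.1, t.2.2.2, t.1, t.2.2.1))
      (fun t => (t.2.2.1, t.1, t.2.2.2, t.2.1)) (fun t ht => by rw [hmem] at ht ⊢; tauto)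
      (fun t ht => by rw [hmem] at ht ⊢; tauto) (fun t ht => rfl) (fun t ht => rfl)
      (fun t ht => rfl)
  have e34 : ∑ t ∈ T, K t.2.2.1 t.2.2.2 = ∑ t ∈ T, K t.1 t.2.1 := by
    refine Finset.sum_nbij' (fun t => (t.2.2.1, t.2.2.2, t.1, t.2.1))
      (fun t => (t.2.2.1, t.2.2.2, t.1, t.2.1)) (fun t ht => by rw [hmem] at ht ⊢; tauto)
      (fun t ht => by rw [hmem] at ht ⊢; tauto) (fun t ht => rfl) (fun t ht => rfl)
      (fun t ht => rfl)
  -- compute M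
  have card3 : ∀ i j k : Fin n, i ≠ j → i ≠ k → j ≠ k →
      (Finset.univ.filter fun l : Fin n => i ≠ l ∧ j ≠ l ∧ k ≠ l).card = n - 3 := by
    intro i j k hij hik hjk
    have : (Finset.univ.filter fun l : Fin n => i ≠ l ∧ j ≠ l ∧ k ≠ l)
        = ({i, j, k} : Finset (Fin n))ᶜ := by
      ext l; simp [ne_comm, and_comm, eq_comm]
    rw [this, Finset.card_compl]
    have : ({i, j, k} : Finset (Fin n)).card = 3 := by
      rw [Finset.card_insert_of_notMem (by simp [hij, hik]),
        Finset.card_insert_of_notMem (by simp [hjk]), Finset.card_singleton]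
    simp [this]
  have card2 : ∀ i j : Fin n, i ≠ j →
      (Finset.univ.filter fun k : Fin n => i ≠ k ∧ j ≠ k).card = n - 2 := by
    intro i j hij
    have : (Finset.univ.filter fun k : Fin n => i ≠ k ∧ j ≠ k)
        = ({i, j} : Finset (Fin n))ᶜ := by
      ext l; simp [ne_comm, and_comm, eq_comm]
    rw [this, Finset.card_compl]
    have : ({i, j} : Finset (Fin n)).card = 2 := by
      rw [Finset.card_insert_of_notMem (by simp [hij]), Finset.card_singleton]
    simp [this]
  have hM : ∑ t ∈ T, K t.1 t.2.1 = ((n : ℝ) - 2) * ((n : ℝ) - 3) * ∑ i, ∑ j, K i j := by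
    rw [hT, Finset.sum_filter, Fintype.sum_prod_type]
    simp only [Fintype.sum_prod_type]
    have inner3 : ∀ i j k : Fin n,
        (∑ l : Fin n, if i ≠ j ∧ i ≠ k ∧ i ≠ l ∧ j ≠ k ∧ j ≠ l ∧ k ≠ l then K i j else 0)
        = if i ≠ j ∧ i ≠ k ∧ j ≠ k then ((n : ℝ) - 3) * K i j else 0 := by
      intro i j k
      by_cases h : i ≠ j ∧ i ≠ k ∧ j ≠ k
      · obtain ⟨hij, hik, hjk⟩ := h
        rw [if_pos ⟨hij, hik, hjk⟩]
        have : ∀ l : Fin n, (if i ≠ j ∧ i ≠ k ∧ i ≠ l ∧ j ≠ k ∧ j ≠ l ∧ k ≠ l then K i j else 0)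
            = if i ≠ l ∧ j ≠ l ∧ k ≠ l then K i j else 0 := by
          intro l; by_cases h' : i ≠ l ∧ j ≠ l ∧ k ≠ l
          · rw [if_pos h', if_pos ⟨hij, hik, h'.1, hjk, h'.2.1, h'.2.2⟩]
          · rw [if_neg h', if_neg (by tauto)]
        rw [Finset.sum_congr rfl fun l _ => this l, ← Finset.sum_filter,
          Finset.sum_const, card3 i j k hij hik hjk]
        rw [nsmul_eq_mul]
        congr 1
        have h4 : (4 : ℕ) ≤ n := hn
        push_cast [Nat.cast_sub (by omega : 3 ≤ n)]
        ring
      · rw [if_neg h]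
        apply Finset.sum_eq_zero
        intro l _
        rw [if_neg (by tauto)]
    have inner2 : ∀ i j : Fin n,
        (∑ k : Fin n, if i ≠ j ∧ i ≠ k ∧ j ≠ k then ((n : ℝ) - 3) * K i j else 0)
        = if i ≠ j then ((n : ℝ) - 2) * (((n : ℝ) - 3) * K i j) else 0 := by
      intro i j
      by_cases h : i ≠ j
      · rw [if_pos h]
        have : ∀ k : Fin n, (if i ≠ j ∧ i ≠ k ∧ j ≠ k then ((n : ℝ) - 3) * K i j else 0)
            = if i ≠ k ∧ j ≠ k then ((n : ℝ) - 3) * K i j else 0 := by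
          intro k; by_cases h' : i ≠ k ∧ j ≠ k
          · rw [if_pos h', if_pos ⟨h, h'⟩]
          · rw [if_neg h', if_neg (by tauto)]
        rw [Finset.sum_congr rfl fun k _ => this k, ← Finset.sum_filter,
          Finset.sum_const, card2 i j h, nsmul_eq_mul]
        congr 1
        push_cast [Nat.cast_sub (by omega : 2 ≤ n)]
        ring
      · rw [if_neg h]
        apply Finset.sum_eq_zero
        intro k _
        rw [if_neg (by tauto)]
    calc ∑ i, ∑ j, ∑ k, ∑ l : Fin n,
          (if i ≠ j ∧ i ≠ k ∧ i ≠ l ∧ j ≠ k ∧ j ≠ l ∧ k ≠ l then K i j else 0)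
        = ∑ i, ∑ j : Fin n, if i ≠ j then ((n : ℝ) - 2) * (((n : ℝ) - 3) * K i j) else 0 := by
          refine Finset.sum_congr rfl fun i _ => Finset.sum_congr rfl fun j _ => ?_
          rw [Finset.sum_congr rfl fun k _ => inner3 i j k, inner2 i j]
      _ = ∑ i, ∑ j : Fin n, ((n : ℝ) - 2) * (((n : ℝ) - 3) * K i j) := by
          refine Finset.sum_congr rfl fun i _ => Finset.sum_congr rfl fun j _ => ?_
          by_cases h : i ≠ j
          · rw [if_pos h]
          · push_neg at h; subst h; rw [if_neg (by simp), hdiag]; ring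
      _ = ((n : ℝ) - 2) * ((n : ℝ) - 3) * ∑ i, ∑ j, K i j := by
          simp only [Finset.mul_sum, mul_assoc]
  -- assemble
  have h2 : ∑ t ∈ T, ((K t.1 t.2.2.1 + K t.1 t.2.2.2 + K t.2.1 t.2.2.1 + K t.2.1 t.2.2.2)
      - γ * (K t.1 t.2.1 + K t.2.2.1 t.2.2.2))
      = (4 - 2 * γ) * (((n : ℝ) - 2) * ((n : ℝ) - 3) * ∑ i, ∑ j, K i j) := by
    rw [Finset.sum_sub_distrib, Finset.sum_add_distrib, Finset.sum_add_distrib,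
      Finset.sum_add_distrib, ← Finset.mul_sum, Finset.sum_add_distrib]
    rw [e13, e14, e23, e24, e34, hM]
    ring
  rw [h2] at h1
  have h4 : (4 : ℝ) ≤ (n : ℝ) := by exact_mod_cast hn
  by_contra h
  push_neg at h
  have c1 : 0 < 4 - 2 * γ := by linarith
  have c2 : (0:ℝ) < ((n : ℝ) - 2) * ((n : ℝ) - 3) := by nlinarith
  have c3 : ((n : ℝ) - 2) * ((n : ℝ) - 3) * ∑ i, ∑ j, K i j ≤ 0 :=
    mul_nonpos_of_nonneg_of_nonpos c2.le h
  nlinarith [mul_nonpos_of_nonneg_of_nonpos c1.le c3]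

theorem stmt_4 {V : Type*} [NormedAddCommGroup V] [InnerProductSpace ℝ V]
    (n : ℕ) (hn : 4 ≤ n) (b : OrthonormalBasis (Fin n) ℝ V)
    (R : V →ₗ[ℝ] V →ₗ[ℝ] V →ₗ[ℝ] V →ₗ[ℝ] ℝ) (hR : IsCurvatureTensor R)
    (S : ℝ) (hS : S = ∑ i : Fin n, ∑ j : Fin n, R (b i) (b j) (b i) (b j))
    (γ : ℝ) (hγ : γ < 2)
    (hyp : ∀ f₁ f₂ f₃ f₄ : V, OrthonormalFrame4 f₁ f₂ f₃ f₄ →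
      R f₁ f₃ f₁ f₃ + R f₁ f₄ f₁ f₄ + R f₂ f₃ f₂ f₃ + R f₂ f₄ f₂ f₄ >
        γ * (R f₁ f₂ f₁ f₂ + R f₃ f₄ f₃ f₄)) :
    S > 0 := by
  rw [hS]
  refine key_sum hn (fun i j => R (b i) (b j) (b i) (b j)) ?_ γ hγ ?_
  · intro i
    have := hR.1 (b i) (b i) (b i) (b i)
    linarith
  · intro i j k l hij hik hil hjk hjl hkl
    have hnorm : ∀ i : Fin n, ‖b i‖ = 1 := b.orthonormal.1
    have hinner : ∀ {i j : Fin n}, i ≠ j → ⟪b i, b j⟫ = 0 := fun h => b.orthonormal.2 h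
    exact hyp (b i) (b j) (b k) (b l)
      ⟨hnorm i, hnorm j, hnorm k, hnorm l, hinner hij, hinner hik, hinner hil,
        hinner hjk, hinner hjl, hinner hkl⟩
end

section
/- Let V be a real inner product space of finite dimension n ≥ 4, let R be an algebraic curvature tensor on V, let {e₁,…,e_n} be an orthonormal basis of V, and let S = Σ_{i=1}^{n} Σ_{j=1}^{n} R(e_i,e_j,e_i,e_j) be the scalar curvature of R. Let γ < 2 be a real number. If for every orthonormal four-frame {f₁,f₂,f₃,f₄} in V one has R(f₁,f₃,f₁,f₃) + R(f₁,f₄,f₁,f₄) + R(f₂,f₃,f₂,f₃) + R(f₂,f₄,f₂,f₄) ≥ γ·(R(f₁,f₂,f₁,f₂) + R(f₃,f₄,f₃,f₄)), then S ≥ 0. -/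
open scoped RealInnerProductSpace

variable {V : Type*} [NormedAddCommGroup V] [InnerProductSpace ℝ V]

theorem stmt_5 {V : Type*} [NormedAddCommGroup V] [InnerProductSpace ℝ V]
    (n : ℕ) (hn : 4 ≤ n) (b : OrthonormalBasis (Fin n) ℝ V)
    (R : V →ₗ[ℝ] V →ₗ[ℝ] V →ₗ[ℝ] V →ₗ[ℝ] ℝ) (hR : IsCurvatureTensor R)
    (S : ℝ) (hS : S = ∑ i : Fin n, ∑ j : Fin n, R (b i) (b j) (b i) (b j))
    (γ : ℝ) (hγ : γ < 2)
    (hyp : ∀ f₁ f₂ f₃ f₄ : V, OrthonormalFrame4 f₁ f₂ f₃ f₄ →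
      R f₁ f₃ f₁ f₃ + R f₁ f₄ f₁ f₄ + R f₂ f₃ f₂ f₃ + R f₂ f₄ f₂ f₄ ≥
        γ * (R f₁ f₂ f₁ f₂ + R f₃ f₄ f₃ f₄)) :
    S ≥ 0 := by
  classical
  obtain ⟨h1, h2, _h3, _h4⟩ := hR
  set K : Fin n → Fin n → ℝ := fun i j => R (b i) (b j) (b i) (b j) with hKdef
  have hK0 : ∀ i, K i i = 0 := by
    intro i
    have h := h1 (b i) (b i) (b i) (b i)
    simp only [hKdef]
    linarith
  have hKs : ∀ i j : Fin n, K j i = K i j := by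
    intro i j
    simp only [hKdef]
    rw [h1 (b j) (b i) (b j) (b i), h2 (b i) (b j) (b j) (b i)]
    ring
  have hfr : ∀ i j k l : Fin n, i ≠ j → i ≠ k → i ≠ l → j ≠ k → j ≠ l → k ≠ l →
      OrthonormalFrame4 (b i) (b j) (b k) (b l) := by
    intro i j k l hij hik hil hjk hjl hkl
    exact ⟨b.orthonormal.1 i, b.orthonormal.1 j, b.orthonormal.1 k, b.orthonormal.1 l,
      b.orthonormal.2 hij, b.orthonormal.2 hik, b.orthonormal.2 hil,
      b.orthonormal.2 hjk, b.orthonormal.2 hjl, b.orthonormal.2 hkl⟩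
  have hg : ∀ i j k l : Fin n, i ≠ j → i ≠ k → i ≠ l → j ≠ k → j ≠ l → k ≠ l →
      0 ≤ K i k + K i l + K j k + K j l - γ * (K i j + K k l) := by
    intro i j k l hij hik hil hjk hjl hkl
    have h := hyp (b i) (b j) (b k) (b l) (hfr i j k l hij hik hil hjk hjl hkl)
    simp only [hKdef]
    linarith
  set r : Fin n → ℝ := fun i => ∑ l, K i l with hrdef
  set T : ℝ := ∑ i, ∑ j, K i j with hTdef
  have hrT : ∑ i, r i = T := by simp only [hrdef, hTdef]
  have lin : ∀ (f g h : Fin n → ℝ) (A B C D : ℝ),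
      ∑ x, (A * f x + B * g x + C * h x + D) =
        A * (∑ x, f x) + B * (∑ x, g x) + C * (∑ x, h x) + (n : ℝ) * D := by
    intro f g h A B C D
    simp [Finset.sum_add_distrib, ← Finset.mul_sum, Finset.sum_const, Finset.card_univ,
      nsmul_eq_mul]
  -- layer 3: innermost sum over l
  have h3sum : ∀ i j k : Fin n, j ≠ i → k ≠ i → k ≠ j →
      ∑ l ∈ ((Finset.univ.erase i).erase j).erase k,
        (K i k + K i l + K j k + K j l - γ * (K i j + K k l)) =
      ((n : ℝ) - 4 + γ) * (K i k + K j k) - (γ * ((n : ℝ) - 3) + 2) * K i j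
        + r i + r j - γ * r k := by
    intro i j k hji hki hkj
    have hkmem : k ∈ (Finset.univ.erase i).erase j := by simp [hki, hkj]
    have hjmem : j ∈ (Finset.univ : Finset (Fin n)).erase i := by simp [hji]
    rw [Finset.sum_erase_eq_sub hkmem, Finset.sum_erase_eq_sub hjmem,
      Finset.sum_erase_eq_sub (Finset.mem_univ i)]
    have e : ∑ l : Fin n, (K i k + K i l + K j k + K j l - γ * (K i j + K k l)) =
        (1 : ℝ) * (∑ l, K i l) + 1 * (∑ l, K j l) + (-γ) * (∑ l, K k l) +
          (n : ℝ) * (K i k + K j k - γ * K i j) := by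
      rw [← lin]
      exact Finset.sum_congr rfl fun x _ => by ring
    rw [e]
    simp only [hK0, hKs i j, hKs i k, hKs j k, ← hrdef]
    simp only [hrdef]
    ring
  -- layer 2: sum over k
  have h2sum : ∀ i j : Fin n, j ≠ i →
      ∑ k ∈ (Finset.univ.erase i).erase j,
        (((n : ℝ) - 4 + γ) * (K i k + K j k) - (γ * ((n : ℝ) - 3) + 2) * K i j
          + r i + r j - γ * r k) =
      (2 * (n : ℝ) - 6 + 2 * γ) * (r i + r j)
        - (2 * (2 * (n : ℝ) - 6) + γ * (((n : ℝ) - 3) * ((n : ℝ) - 2) + 2)) * K i j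
        - γ * T := by
    intro i j hji
    have hjmem : j ∈ (Finset.univ : Finset (Fin n)).erase i := by simp [hji]
    rw [Finset.sum_erase_eq_sub hjmem, Finset.sum_erase_eq_sub (Finset.mem_univ i)]
    have e : ∑ k : Fin n, (((n : ℝ) - 4 + γ) * (K i k + K j k)
          - (γ * ((n : ℝ) - 3) + 2) * K i j + r i + r j - γ * r k) =
        ((n : ℝ) - 4 + γ) * (∑ k, K i k) + ((n : ℝ) - 4 + γ) * (∑ k, K j k)
          + (-γ) * (∑ k, r k) +
          (n : ℝ) * (-(γ * ((n : ℝ) - 3) + 2) * K i j + r i + r j) := by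
      rw [← lin]
      exact Finset.sum_congr rfl fun x _ => by ring
    rw [e, hrT]
    simp only [hK0, hKs i j, ← hrdef]
    simp only [hrdef]
    ring
  -- layer 1: sum over j
  have h1sum : ∀ i : Fin n,
      ∑ j ∈ Finset.univ.erase i,
        ((2 * (n : ℝ) - 6 + 2 * γ) * (r i + r j)
          - (2 * (2 * (n : ℝ) - 6) + γ * (((n : ℝ) - 3) * ((n : ℝ) - 2) + 2)) * K i j
          - γ * T) =
      (2 * (n : ℝ) - 6 + 2 * γ) * (((n : ℝ) - 2) * r i + T)
        - (2 * (2 * (n : ℝ) - 6) + γ * (((n : ℝ) - 3) * ((n : ℝ) - 2) + 2)) * r i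
        - ((n : ℝ) - 1) * γ * T := by
    intro i
    rw [Finset.sum_erase_eq_sub (Finset.mem_univ i)]
    have e : ∑ j : Fin n, ((2 * (n : ℝ) - 6 + 2 * γ) * (r i + r j)
          - (2 * (2 * (n : ℝ) - 6) + γ * (((n : ℝ) - 3) * ((n : ℝ) - 2) + 2)) * K i j
          - γ * T) =
        (2 * (n : ℝ) - 6 + 2 * γ) * (∑ j, r j)
          + (-(2 * (2 * (n : ℝ) - 6) + γ * (((n : ℝ) - 3) * ((n : ℝ) - 2) + 2))) * (∑ j, K i j)
          + (0 : ℝ) * (∑ j, r j) +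
          (n : ℝ) * ((2 * (n : ℝ) - 6 + 2 * γ) * r i - γ * T) := by
      rw [← lin]
      exact Finset.sum_congr rfl fun x _ => by ring
    rw [e, hrT]
    simp only [hK0, ← hrdef]
    simp only [hrdef]
    ring
  -- big sum is nonnegative
  have big0 : (0 : ℝ) ≤ ∑ i, ∑ j ∈ Finset.univ.erase i,
      ∑ k ∈ (Finset.univ.erase i).erase j, ∑ l ∈ ((Finset.univ.erase i).erase j).erase k,
        (K i k + K i l + K j k + K j l - γ * (K i j + K k l)) := by
    apply Finset.sum_nonneg; intro i _
    apply Finset.sum_nonneg; intro j hj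
    apply Finset.sum_nonneg; intro k hk
    apply Finset.sum_nonneg; intro l hl
    have hji : j ≠ i := (Finset.mem_erase.mp hj).1
    have hkj : k ≠ j := (Finset.mem_erase.mp hk).1
    have hki : k ≠ i := (Finset.mem_erase.mp (Finset.mem_erase.mp hk).2).1
    have hlk : l ≠ k := (Finset.mem_erase.mp hl).1
    have hlj : l ≠ j := (Finset.mem_erase.mp (Finset.mem_erase.mp hl).2).1
    have hli : l ≠ i :=
      (Finset.mem_erase.mp (Finset.mem_erase.mp (Finset.mem_erase.mp hl).2).2).1
    exact hg i j k l hji.symm hki.symm hli.symm hkj.symm hlj.symm hlk.symm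
  -- compute the big sum
  have keyeq : ∑ i, ∑ j ∈ Finset.univ.erase i,
      ∑ k ∈ (Finset.univ.erase i).erase j, ∑ l ∈ ((Finset.univ.erase i).erase j).erase k,
        (K i k + K i l + K j k + K j l - γ * (K i j + K k l)) =
      2 * (2 - γ) * ((n : ℝ) - 2) * ((n : ℝ) - 3) * T := by
    have step : ∀ i : Fin n, ∑ j ∈ Finset.univ.erase i,
        ∑ k ∈ (Finset.univ.erase i).erase j, ∑ l ∈ ((Finset.univ.erase i).erase j).erase k,
          (K i k + K i l + K j k + K j l - γ * (K i j + K k l)) =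
        (2 * (n : ℝ) - 6 + 2 * γ) * (((n : ℝ) - 2) * r i + T)
          - (2 * (2 * (n : ℝ) - 6) + γ * (((n : ℝ) - 3) * ((n : ℝ) - 2) + 2)) * r i
          - ((n : ℝ) - 1) * γ * T := by
      intro i
      rw [← h1sum i]
      apply Finset.sum_congr rfl; intro j hj
      have hji : j ≠ i := (Finset.mem_erase.mp hj).1
      rw [← h2sum i j hji]
      apply Finset.sum_congr rfl; intro k hk
      have hkj : k ≠ j := (Finset.mem_erase.mp hk).1
      have hki : k ≠ i := (Finset.mem_erase.mp (Finset.mem_erase.mp hk).2).1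
      exact h3sum i j k hji hki hkj
    rw [Finset.sum_congr rfl fun i _ => step i]
    have e : ∑ i : Fin n, ((2 * (n : ℝ) - 6 + 2 * γ) * (((n : ℝ) - 2) * r i + T)
          - (2 * (2 * (n : ℝ) - 6) + γ * (((n : ℝ) - 3) * ((n : ℝ) - 2) + 2)) * r i
          - ((n : ℝ) - 1) * γ * T) =
        ((2 * (n : ℝ) - 6 + 2 * γ) * ((n : ℝ) - 2)
            - (2 * (2 * (n : ℝ) - 6) + γ * (((n : ℝ) - 3) * ((n : ℝ) - 2) + 2))) * (∑ i, r i)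
          + (0 : ℝ) * (∑ i, r i) + (0 : ℝ) * (∑ i, r i) +
          (n : ℝ) * ((2 * (n : ℝ) - 6 + 2 * γ) * T - ((n : ℝ) - 1) * γ * T) := by
      rw [← lin]
      exact Finset.sum_congr rfl fun x _ => by ring
    rw [e, hrT]
    ring
  rw [keyeq] at big0
  have hn' : (4 : ℝ) ≤ (n : ℝ) := by exact_mod_cast hn
  have hc : 0 < 2 * (2 - γ) * ((n : ℝ) - 2) * ((n : ℝ) - 3) :=
    mul_pos (mul_pos (by linarith) (by linarith)) (by linarith)
  have hT : 0 ≤ T := by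
    by_contra h
    push_neg at h
    nlinarith [mul_pos hc (neg_pos.mpr h)]
  have hST : S = T := by rw [hS, hTdef, hKdef]
  rw [ge_iff_le, hST]
  exact hT
end

section
/- Let V be a real inner product space of finite dimension n ≥ 4, let R be an algebraic curvature tensor on V, let {e₁,…,e_n} be an orthonormal basis of V, and let S₀ = (1/(n(n−1)))·Σ_{i,j=1}^{n} R(e_i,e_j,e_i,e_j) be the normalized scalar curvature of R. If for every orthonormal four-frame {f₁,f₂,f₃,f₄} in V one has R(f₁,f₃,f₁,f₃) + R(f₁,f₄,f₁,f₄) + R(f₂,f₃,f₂,f₃) + R(f₂,f₄,f₂,f₄) > (4n(n−1)/(n²−n+12))·S₀, then for every orthonormal four-frame {f₁,f₂,f₃,f₄} in V one has R(f₁,f₃,f₁,f₃) + R(f₁,f₄,f₁,f₄) + R(f₂,f₃,f₂,f₃) + R(f₂,f₄,f₂,f₄) > (1/2)·(R(f₁,f₂,f₁,f₂) + R(f₃,f₄,f₃,f₄)). -/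
open scoped RealInnerProductSpace

variable {V : Type*} [NormedAddCommGroup V] [InnerProductSpace ℝ V]

/-!
Extend the frame to an orthonormal basis `e` indexed by `Fin 4 ⊕ Fin (n - 4)` and put
`r i j = R (e i) (e j) (e i) (e j)`; then `n (n - 1) S₀ = ∑ i, ∑ j, r i j`, since this double trace
does not depend on the basis. The hypothesis bounds every cross sum `r i k + r i l + r j k + r j l`
of four distinct indices from below by `C = 4 n (n - 1) S₀ / (n² - n + 12)`. Let `q` be the cross
sum of the given frame, `M` the sum of `r` between frame and outer indices and `O` the sum over
pairs of outer indices. Averaging the bound over the frame itself, over pairs of outer indices, and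
over all frames inside `{a, c} ∪ outer` for the four cross pairs `(a, c)` of the given frame gives
`24 q + 8 M + 4 O > (n² - n + 12) C` (for `n < 6` the frames with one outer index suffice). As
`4 ∑ i, ∑ j, r i j = 8 (r₁₂ + r₃₄) + 8 q + 8 M + 4 O = (n² - n + 12) C`, this says `r₁₂ + r₃₄ < 2 q`.
-/

open Finset Function

theorem OrthonormalBasis.sum_apply_self_eq {ι κ : Type*} [Fintype ι] [Fintype κ]
    (G : V →ₗ[ℝ] V →ₗ[ℝ] ℝ) (v : OrthonormalBasis ι ℝ V) (w : OrthonormalBasis κ ℝ V) :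
    ∑ i, G (v i) (v i) = ∑ j, G (w j) (w j) := by
  have := v.toBasis.finiteDimensional_of_finite
  simpa using congrArg (TensorProduct.lift G)
    ((InnerProductSpace.canonicalCovariantTensor_eq_sum V v).symm.trans
      (InnerProductSpace.canonicalCovariantTensor_eq_sum V w))

theorem OrthonormalBasis.sum_sum_sectional_eq {ι κ : Type*} [Fintype ι] [Fintype κ]
    (R : V →ₗ[ℝ] V →ₗ[ℝ] V →ₗ[ℝ] V →ₗ[ℝ] ℝ)
    (v : OrthonormalBasis ι ℝ V) (w : OrthonormalBasis κ ℝ V) :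
    ∑ i, ∑ j, R (v i) (v j) (v i) (v j) = ∑ i, ∑ j, R (w i) (w j) (w i) (w j) :=
  calc ∑ i, ∑ j, R (v i) (v j) (v i) (v j)
      = ∑ i, ∑ j, R (v i) (w j) (v i) (w j) :=
        sum_congr rfl fun i _ => sum_apply_self_eq ((R (v i)).flip (v i)) v w
    _ = ∑ j, ∑ i, R (v i) (w j) (v i) (w j) := sum_comm
    _ = ∑ j, ∑ i, R (w i) (w j) (w i) (w j) := sum_congr rfl fun j _ =>
        sum_apply_self_eq ((R.flip (w j)).compr₂ (LinearMap.applyₗ (w j))) v w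
    _ = ∑ i, ∑ j, R (w i) (w j) (w i) (w j) := sum_comm

theorem Orthonormal.exists_orthonormalBasis_sum_extension [FiniteDimensional ℝ V]
    {ι κ : Type*} [Fintype ι] [Fintype κ] {f : ι → V} (hf : Orthonormal ℝ f)
    (hdim : Module.finrank ℝ V = Fintype.card ι + Fintype.card κ) :
    ∃ e : OrthonormalBasis (ι ⊕ κ) ℝ V, ∀ i, e (Sum.inl i) = f i := by
  set s := Set.range (Sum.inl : ι → ι ⊕ κ)
  have hrestrict : s.domRestrict (Sum.elim f 0) =
      f ∘ (Equiv.ofInjective _ Sum.inl_injective).symm := by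
    ext ⟨_, i, rfl⟩
    simp [Equiv.ofInjective_symm_apply]
  obtain ⟨e, he⟩ := Orthonormal.exists_orthonormalBasis_extension_of_card_eq
    (hdim.trans Fintype.card_sum.symm) (s := s) (v := Sum.elim f 0)
    (hrestrict ▸ hf.comp _ (Equiv.injective _))
  exact ⟨e, fun i => he _ ⟨i, rfl⟩⟩

theorem OrthonormalFrame4.orthonormal {f₁ f₂ f₃ f₄ : V} (h : OrthonormalFrame4 f₁ f₂ f₃ f₄) :
    Orthonormal ℝ ![f₁, f₂, f₃, f₄] := by
  obtain ⟨h1, h2, h3, h4, h12, h13, h14, h23, h24, h34⟩ := h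
  refine ⟨fun i => by fin_cases i <;> assumption, fun i j hij => ?_⟩
  fin_cases i <;> fin_cases j <;> simp_all [real_inner_comm]

theorem Orthonormal.orthonormalFrame4 {ι : Type*} {v : ι → V} (hv : Orthonormal ℝ v)
    {i j k l : ι} (hij : i ≠ j) (hik : i ≠ k) (hil : i ≠ l) (hjk : j ≠ k) (hjl : j ≠ l)
    (hkl : k ≠ l) : OrthonormalFrame4 (v i) (v j) (v k) (v l) :=
  ⟨hv.1 i, hv.1 j, hv.1 k, hv.1 l, hv.2 hij, hv.2 hik, hv.2 hil, hv.2 hjk, hv.2 hjl, hv.2 hkl⟩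

section Averaging

variable {ι : Type*}

theorem Finset.card_mul_lt_two_mul_sum_of_lt_add {t : Finset ι} (ht : 2 ≤ #t) {h : ι → ℝ} {C : ℝ}
    (hpair : ∀ k ∈ t, ∀ l ∈ t, k ≠ l → C < h k + h l) :
    #t * C < 2 * ∑ k ∈ t, h k := by
  classical
  have hcard : ∀ k ∈ t, ((t.erase k).card : ℝ) = #t - 1 := fun k hk => by
    rw [card_erase_of_mem hk, Nat.cast_pred (by omega)]
  have hlt : ∑ k ∈ t, ∑ _l ∈ t.erase k, C < ∑ k ∈ t, ∑ l ∈ t.erase k, (h k + h l) :=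
    sum_lt_sum_of_nonempty (card_pos.1 (by omega)) fun k hk =>
      sum_lt_sum_of_nonempty (card_pos.1 (by rw [card_erase_of_mem hk]; omega)) fun l hl =>
        hpair k hk l (mem_of_mem_erase hl) (ne_of_mem_erase hl).symm
  have hC : ∑ k ∈ t, ∑ _l ∈ t.erase k, C = #t * ((#t - 1) * C) := by
    rw [← nsmul_eq_mul, ← sum_const]
    exact sum_congr rfl fun k hk => by rw [sum_const, nsmul_eq_mul, hcard k hk]
  have hh : ∑ k ∈ t, ∑ l ∈ t.erase k, (h k + h l) = 2 * (#t - 1) * ∑ k ∈ t, h k := by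
    rw [sum_congr rfl fun k hk => by
      rw [sum_add_distrib, sum_const, nsmul_eq_mul, hcard k hk, sum_erase_eq_sub hk]]
    rw [sum_add_distrib, sum_sub_distrib, sum_const, nsmul_eq_mul, ← mul_sum]
    ring
  have : (1 : ℝ) ≤ #t - 1 := by
    have : (2 : ℝ) ≤ #t := by exact_mod_cast ht
    linarith
  nlinarith

def FrameLowerBound (r : ι → ι → ℝ) (C : ℝ) : Prop :=
  ∀ i j k l, i ≠ j → i ≠ k → i ≠ l → j ≠ k → j ≠ l → k ≠ l → C < r i k + r i l + r j k + r j l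

theorem FrameLowerBound.comp {κ : Type*} {r : ι → ι → ℝ} {C : ℝ} (h : FrameLowerBound r C)
    {g : κ → ι} (hg : Injective g) : FrameLowerBound (fun i j => r (g i) (g j)) C :=
  fun _ _ _ _ hij hik hil hjk hjl hkl =>
    h _ _ _ _ (hg.ne hij) (hg.ne hik) (hg.ne hil) (hg.ne hjk) (hg.ne hjl) (hg.ne hkl)

theorem FrameLowerBound.card_mul_lt_four_mul_sum [Fintype ι] {r : ι → ι → ℝ} {C : ℝ}
    (h : FrameLowerBound r C) (hdiag : ∀ i, r i i = 0) (hcard : 4 ≤ Fintype.card ι) :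
    Fintype.card ι * (Fintype.card ι - 1) * C < 4 * ∑ i, ∑ j, r i j := by
  classical
  set N := Fintype.card ι
  have hrow : ∀ i j, i ≠ j →
      (N - 2) * C < 2 * ((∑ k, r i k) + ∑ k, r j k - r i j - r j i) := by
    intro i j hij
    set t := (univ.erase i).erase j
    have ht : #t = N - 2 := by
      rw [card_erase_of_mem (mem_erase.2 ⟨hij.symm, mem_univ j⟩), card_erase_of_mem (mem_univ i),
        card_univ]; omega
    have := card_mul_lt_two_mul_sum_of_lt_add (t := t) (h := fun k => r i k + r j k) (C := C)
      (by omega) fun k hk l hl hkl => by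
        simp only [t, mem_erase] at hk hl
        linarith [h i j k l hij (Ne.symm hk.2.1) (Ne.symm hl.2.1) (Ne.symm hk.1) (Ne.symm hl.1) hkl]
    rw [ht, Nat.cast_sub (by omega), sum_erase_eq_sub (mem_erase.2 ⟨hij.symm, mem_univ j⟩),
      sum_erase_eq_sub (mem_univ i), sum_add_distrib, hdiag, hdiag] at this
    push_cast at this
    linarith
  have hlt : ∑ i, ∑ _j ∈ univ.erase i, (N - 2) * C <
      ∑ i, ∑ j ∈ univ.erase i, 2 * ((∑ k, r i k) + ∑ k, r j k - r i j - r j i) :=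
    sum_lt_sum_of_nonempty (card_pos.1 (by rw [card_univ]; omega)) fun i _ =>
      sum_lt_sum_of_nonempty (card_pos.1 (by rw [card_erase_of_mem (mem_univ i), card_univ]; omega))
        fun j hj => hrow i j (ne_of_mem_erase hj).symm
  simp only [sum_erase_eq_sub (mem_univ _), sum_const, card_univ, nsmul_eq_mul, hdiag,
    ← mul_sum, sum_sub_distrib, sum_add_distrib] at hlt
  rw [sum_comm (f := fun j i => r i j)] at hlt
  have hN : (4 : ℝ) ≤ N := by exact_mod_cast hcard
  nlinarith

end Averaging

section FourFrame

open Sum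

variable {m : ℕ} {r : Fin 4 ⊕ Fin m → Fin 4 ⊕ Fin m → ℝ} {C : ℝ}

theorem sum_sum_eq_frame_add_mixed_add_outer (hsym : ∀ i j, r i j = r j i)
    (hdiag : ∀ i, r i i = 0) :
    ∑ i, ∑ j, r i j = 2 * (r (inl 0) (inl 1) + r (inl 2) (inl 3)) +
      2 * (r (inl 0) (inl 2) + r (inl 0) (inl 3) + r (inl 1) (inl 2) + r (inl 1) (inl 3)) +
      2 * ∑ x, ∑ a, r (inl a) (inr x) + ∑ x, ∑ y, r (inr x) (inr y) := by
  have hswap : ∀ a, ∑ x, r (inr x) (inl a) = ∑ x, r (inl a) (inr x) :=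
    fun a => sum_congr rfl fun x _ => hsym _ _
  simp only [Fintype.sum_sum_type, Fin.sum_univ_four, sum_add_distrib, hswap, hdiag]
  linarith [hsym (inl 0) (inl 1), hsym (inl 0) (inl 2), hsym (inl 0) (inl 3),
    hsym (inl 1) (inl 2), hsym (inl 1) (inl 3), hsym (inl 2) (inl 3)]

theorem FrameLowerBound.lt_cross_add_mixed (h : FrameLowerBound r C)
    (hsym : ∀ i j, r i j = r j i) (x : Fin m) :
    4 * C < 2 * (r (inl 0) (inl 2) + r (inl 0) (inl 3) + r (inl 1) (inl 2) + r (inl 1) (inl 3)) +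
      2 * ∑ a, r (inl a) (inr x) := by
  have h₁ := h (inl 0) (inl 1) (inr x) (inl 2) (by simp) (by simp) (by simp) (by simp) (by simp)
    (by simp)
  have h₂ := h (inl 0) (inl 1) (inr x) (inl 3) (by simp) (by simp) (by simp) (by simp) (by simp)
    (by simp)
  have h₃ := h (inl 2) (inl 3) (inr x) (inl 0) (by simp) (by simp) (by simp) (by simp) (by simp)
    (by simp)
  have h₄ := h (inl 2) (inl 3) (inr x) (inl 1) (by simp) (by simp) (by simp) (by simp) (by simp)
    (by simp)
  rw [Fin.sum_univ_four]
  linarith [hsym (inl 2) (inl 0), hsym (inl 2) (inl 1), hsym (inl 3) (inl 0),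
    hsym (inl 3) (inl 1)]

theorem FrameLowerBound.lt_mixed_add_mixed (h : FrameLowerBound r C) {x y : Fin m} (hxy : x ≠ y) :
    2 * C < ∑ a, r (inl a) (inr x) + ∑ a, r (inl a) (inr y) := by
  have h₁ := h (inl 0) (inl 1) (inr x) (inr y) (by simp) (by simp) (by simp) (by simp) (by simp)
    (by simpa using hxy)
  have h₂ := h (inl 2) (inl 3) (inr x) (inr y) (by simp) (by simp) (by simp) (by simp) (by simp)
    (by simpa using hxy)
  rw [Fin.sum_univ_four, Fin.sum_univ_four]
  linarith

theorem FrameLowerBound.lt_sum_pair_union_outer (h : FrameLowerBound r C) (hsym : ∀ i j, r i j = r j i)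
    (hdiag : ∀ i, r i i = 0) (hm : 2 ≤ m) {a c : Fin 4} (hac : a ≠ c) :
    (m + 2) * (m + 1) * C < 4 * (2 * r (inl a) (inl c) + 2 * ∑ x, r (inl a) (inr x) +
      2 * ∑ x, r (inl c) (inr x) + ∑ x, ∑ y, r (inr x) (inr y)) := by
  have hinj : Injective (Sum.map ![a, c] id : Fin 2 ⊕ Fin m → Fin 4 ⊕ Fin m) :=
    Sum.map_injective.2 ⟨fun i j hij => by
      fin_cases i <;> fin_cases j <;> simp_all [eq_comm], injective_id⟩
  have := (h.comp hinj).card_mul_lt_four_mul_sum (fun _ => hdiag _)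
    (by simp only [Fintype.card_sum, Fintype.card_fin]; omega)
  have hswap : ∀ b, ∑ x, r (inr x) (inl b) = ∑ x, r (inl b) (inr x) :=
    fun b => sum_congr rfl fun x _ => hsym _ _
  simp only [Fintype.sum_sum_type, Fin.sum_univ_two, Fintype.card_sum, Fintype.card_fin,
    Sum.map_inl, Sum.map_inr, Matrix.cons_val_zero, Matrix.cons_val_one, id_eq, sum_add_distrib,
    hswap, hdiag] at this
  push_cast at this
  linarith [hsym (inl c) (inl a)]

theorem FrameLowerBound.parts_lt_two_mul_cross (h : FrameLowerBound r C)
    (hsym : ∀ i j, r i j = r j i) (hdiag : ∀ i, r i i = 0)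
    (hC : 4 * ∑ i, ∑ j, r i j ≤ ((m : ℝ) ^ 2 + 7 * m + 24) * C) :
    r (inl 0) (inl 1) + r (inl 2) (inl 3) <
      2 * (r (inl 0) (inl 2) + r (inl 0) (inl 3) + r (inl 1) (inl 2) + r (inl 1) (inl 3)) := by
  rw [sum_sum_eq_frame_add_mixed_add_outer hsym hdiag] at hC
  have hq := h (inl 0) (inl 1) (inl 2) (inl 3) (by simp) (by simp) (by simp) (by simp) (by simp)
    (by simp)
  rcases lt_or_ge m 2 with hm | hm
  -- no frame contains two outer indices; those with one outer index suffice
  · have hmixed := sum_le_sum fun x (_ : x ∈ univ) => (h.lt_cross_add_mixed hsym x).le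
    rw [sum_const, sum_add_distrib, sum_const, ← mul_sum, card_univ, Fintype.card_fin] at hmixed
    have : Subsingleton (Fin m) := Fin.subsingleton_iff_le_one.2 (by omega)
    have hout : ∑ x, ∑ y, r (inr x) (inr y) = 0 :=
      sum_eq_zero fun x _ => sum_eq_zero fun y _ => by rw [Subsingleton.elim y x, hdiag]
    rw [hout] at hC
    rw [nsmul_eq_mul] at hmixed
    interval_cases m <;> norm_num at hmixed hC <;> linarith
  · have hmixed := card_mul_lt_two_mul_sum_of_lt_add (t := univ) (by simpa using hm)
      fun x _ y _ hxy => h.lt_mixed_add_mixed hxy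
    have h02 := h.lt_sum_pair_union_outer hsym hdiag hm (a := 0) (c := 2) (by decide)
    have h03 := h.lt_sum_pair_union_outer hsym hdiag hm (a := 0) (c := 3) (by decide)
    have h12 := h.lt_sum_pair_union_outer hsym hdiag hm (a := 1) (c := 2) (by decide)
    have h13 := h.lt_sum_pair_union_outer hsym hdiag hm (a := 1) (c := 3) (by decide)
    simp only [card_univ, Fintype.card_fin] at hmixed
    rw [sum_comm, Fin.sum_univ_four] at hC hmixed
    linarith

end FourFrame

theorem IsCurvatureTensor.sectional_comm_s8 {R : V →ₗ[ℝ] V →ₗ[ℝ] V →ₗ[ℝ] V →ₗ[ℝ] ℝ}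
    (hR : IsCurvatureTensor R) (x y : V) : R x y x y = R y x y x := by
  rw [hR.1, hR.2.1, neg_neg]

theorem IsCurvatureTensor.sectional_self {R : V →ₗ[ℝ] V →ₗ[ℝ] V →ₗ[ℝ] V →ₗ[ℝ] ℝ}
    (hR : IsCurvatureTensor R) (x : V) : R x x x x = 0 := by
  linarith [hR.1 x x x x]

theorem stmt_8 {V : Type*} [NormedAddCommGroup V] [InnerProductSpace ℝ V]
    (n : ℕ) (hn : 4 ≤ n) (b : OrthonormalBasis (Fin n) ℝ V)
    (R : V →ₗ[ℝ] V →ₗ[ℝ] V →ₗ[ℝ] V →ₗ[ℝ] ℝ) (hR : IsCurvatureTensor R)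
    (S₀ : ℝ) (hS₀ : S₀ = (1 / ((n : ℝ) * ((n : ℝ) - 1))) *
      ∑ i : Fin n, ∑ j : Fin n, R (b i) (b j) (b i) (b j))
    (hyp : ∀ f₁ f₂ f₃ f₄ : V, OrthonormalFrame4 f₁ f₂ f₃ f₄ →
      R f₁ f₃ f₁ f₃ + R f₁ f₄ f₁ f₄ + R f₂ f₃ f₂ f₃ + R f₂ f₄ f₂ f₄ >
        (4 * (n : ℝ) * ((n : ℝ) - 1) / ((n : ℝ) ^ 2 - (n : ℝ) + 12)) * S₀) :
    ∀ f₁ f₂ f₃ f₄ : V, OrthonormalFrame4 f₁ f₂ f₃ f₄ →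
      R f₁ f₃ f₁ f₃ + R f₁ f₄ f₁ f₄ + R f₂ f₃ f₂ f₃ + R f₂ f₄ f₂ f₄ >
        (1 / 2) * (R f₁ f₂ f₁ f₂ + R f₃ f₄ f₃ f₄) := by
  intro f₁ f₂ f₃ f₄ hf
  have := b.toBasis.finiteDimensional_of_finite
  obtain ⟨m, rfl⟩ : ∃ m, n = m + 4 := ⟨n - 4, by omega⟩
  obtain ⟨e, he⟩ := hf.orthonormal.exists_orthonormalBasis_sum_extension (κ := Fin m)
    (by rw [Module.finrank_eq_card_basis b.toBasis]; simp [add_comm])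
  have hframe : FrameLowerBound (fun i j => R (e i) (e j) (e i) (e j)) _ :=
    fun i j k l hij hik hil hjk hjl hkl =>
      hyp _ _ _ _ (e.orthonormal.orthonormalFrame4 hij hik hil hjk hjl hkl)
  have hC : 4 * ∑ i, ∑ j, R (e i) (e j) (e i) (e j) ≤ ((m : ℝ) ^ 2 + 7 * m + 24) *
      (4 * ((m + 4 : ℕ) : ℝ) * (((m + 4 : ℕ) : ℝ) - 1) /
        (((m + 4 : ℕ) : ℝ) ^ 2 - ((m + 4 : ℕ) : ℝ) + 12) * S₀) := by
    rw [e.sum_sum_sectional_eq R b, hS₀]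
    apply le_of_eq
    push_cast
    rw [show (m + 4 : ℝ) ^ 2 - (m + 4) + 12 = m ^ 2 + 7 * m + 24 by ring,
      show (m + 4 : ℝ) - 1 = m + 3 by ring]
    field_simp
  have := hframe.parts_lt_two_mul_cross (fun _ _ => hR.sectional_comm_s8 _ _)
    (fun _ => hR.sectional_self _) hC
  simp only [he, Matrix.cons_val] at this
  linarith
end

section
/- Let V be a real inner product space of finite dimension n ≥ 4, let R be an algebraic curvature tensor on V, let {e₁,…,e_n} be an orthonormal basis of V, and let S = Σ_{i,j=1}^{n} R(e_i,e_j,e_i,e_j) be the scalar curvature of R. If R has positive isotropic curvature, i.e. for every orthonormal four-frame {f₁,f₂,f₃,f₄} in V one has R(f₁,f₃,f₁,f₃) + R(f₁,f₄,f₁,f₄) + R(f₂,f₃,f₂,f₃) + R(f₂,f₄,f₂,f₄) − 2·R(f₁,f₂,f₃,f₄) > 0, then S > 0. -/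
set_option maxHeartbeats 1000000

section Helpers

lemma swap23 {n : ℕ} (g : Fin n → Fin n → Fin n → Fin n → ℝ) :
    ∑ i : Fin n, ∑ j : Fin n, ∑ k : Fin n, ∑ l : Fin n, g i j k l
    = ∑ i : Fin n, ∑ k : Fin n, ∑ j : Fin n, ∑ l : Fin n, g i j k l :=
  Finset.sum_congr rfl fun i _ => Finset.sum_comm

lemma swap12 {n : ℕ} (g : Fin n → Fin n → Fin n → Fin n → ℝ) :
    ∑ i : Fin n, ∑ j : Fin n, ∑ k : Fin n, ∑ l : Fin n, g i j k l
    = ∑ j : Fin n, ∑ i : Fin n, ∑ k : Fin n, ∑ l : Fin n, g i j k l :=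
  Finset.sum_comm

lemma swap34 {n : ℕ} (g : Fin n → Fin n → Fin n → Fin n → ℝ) :
    ∑ i : Fin n, ∑ j : Fin n, ∑ k : Fin n, ∑ l : Fin n, g i j k l
    = ∑ i : Fin n, ∑ j : Fin n, ∑ l : Fin n, ∑ k : Fin n, g i j k l :=
  Finset.sum_congr rfl fun i _ => Finset.sum_congr rfl fun j _ => Finset.sum_comm

lemma cnt {n : ℕ} (f : Fin n → Fin n → ℝ) (hf : ∀ i, f i i = 0) :
    ∑ a : Fin n, ∑ c : Fin n, ∑ x : Fin n, ∑ y : Fin n,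
      (if a ≠ c ∧ a ≠ x ∧ a ≠ y ∧ c ≠ x ∧ c ≠ y ∧ x ≠ y then f a c else 0)
    = (((n-2)*(n-3) : ℕ) : ℝ) * ∑ a : Fin n, ∑ c : Fin n, f a c := by
  rw [Finset.mul_sum]
  refine Finset.sum_congr rfl fun a _ => ?_
  rw [Finset.mul_sum]
  refine Finset.sum_congr rfl fun c _ => ?_
  by_cases hac : a = c
  · subst hac
    simp [hf]
  · have key : ∀ x : Fin n,
        (∑ y : Fin n, if a ≠ c ∧ a ≠ x ∧ a ≠ y ∧ c ≠ x ∧ c ≠ y ∧ x ≠ y then f a c else 0)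
        = if a ≠ x ∧ c ≠ x then ((n-3 : ℕ) : ℝ) * f a c else 0 := by
      intro x
      by_cases hx : a ≠ x ∧ c ≠ x
      · rw [if_pos hx]
        have hfil : (Finset.univ.filter
            (fun y : Fin n => a ≠ c ∧ a ≠ x ∧ a ≠ y ∧ c ≠ x ∧ c ≠ y ∧ x ≠ y))
            = Finset.univ \ {a, c, x} := by
          ext y
          simp only [Finset.mem_filter, Finset.mem_univ, true_and, Finset.mem_sdiff,
            Finset.mem_insert, Finset.mem_singleton, not_or]
          constructor
          · rintro ⟨_, _, h3, _, h5, h6⟩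
            exact ⟨Ne.symm h3, Ne.symm h5, Ne.symm h6⟩
          · rintro ⟨h1, h2, h3⟩
            exact ⟨hac, hx.1, Ne.symm h1, hx.2, Ne.symm h2, Ne.symm h3⟩
        rw [← Finset.sum_filter, hfil, Finset.sum_const,
          Finset.card_sdiff_of_subset (Finset.subset_univ _), Finset.card_univ, Fintype.card_fin]
        have hcard : ({a, c, x} : Finset (Fin n)).card = 3 := by
          rw [Finset.card_insert_of_notMem (by simp [hac, hx.1]),
            Finset.card_insert_of_notMem (by simp [hx.2]), Finset.card_singleton]
        rw [hcard, nsmul_eq_mul]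
      · rw [if_neg hx]
        refine Finset.sum_eq_zero fun y _ => ?_
        rw [if_neg]
        tauto
    rw [Finset.sum_congr rfl fun x _ => key x]
    have hfil2 : (Finset.univ.filter (fun x : Fin n => a ≠ x ∧ c ≠ x))
        = Finset.univ \ {a, c} := by
      ext x
      simp only [Finset.mem_filter, Finset.mem_univ, true_and, Finset.mem_sdiff,
        Finset.mem_insert, Finset.mem_singleton, not_or]
      constructor
      · rintro ⟨h1, h2⟩; exact ⟨Ne.symm h1, Ne.symm h2⟩
      · rintro ⟨h1, h2⟩; exact ⟨Ne.symm h1, Ne.symm h2⟩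
    rw [← Finset.sum_filter, hfil2, Finset.sum_const,
      Finset.card_sdiff_of_subset (Finset.subset_univ _), Finset.card_univ, Fintype.card_fin]
    have hcard2 : ({a, c} : Finset (Fin n)).card = 2 := by
      rw [Finset.card_insert_of_notMem (by simp [hac]), Finset.card_singleton]
    rw [hcard2, nsmul_eq_mul]
    push_cast [Nat.cast_sub]
    ring_nf

end Helpers



open scoped RealInnerProductSpace

variable {V : Type*} [NormedAddCommGroup V] [InnerProductSpace ℝ V]

theorem stmt_17 {V : Type*} [NormedAddCommGroup V] [InnerProductSpace ℝ V]
    (n : ℕ) (hn : 4 ≤ n) (b : OrthonormalBasis (Fin n) ℝ V)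
    (R : V →ₗ[ℝ] V →ₗ[ℝ] V →ₗ[ℝ] V →ₗ[ℝ] ℝ) (hR : IsCurvatureTensor R)
    (S : ℝ) (hS : S = ∑ i : Fin n, ∑ j : Fin n, R (b i) (b j) (b i) (b j))
    (hPIC : ∀ f₁ f₂ f₃ f₄ : V, OrthonormalFrame4 f₁ f₂ f₃ f₄ →
      R f₁ f₃ f₁ f₃ + R f₁ f₄ f₁ f₄ + R f₂ f₃ f₂ f₃ + R f₂ f₄ f₂ f₄
        - 2 * R f₁ f₂ f₃ f₄ > 0) :
    S > 0 := by
  obtain ⟨hA1, hA2, hA3, hB⟩ := hR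
  set K : Fin n → Fin n → ℝ := fun i j => R (b i) (b j) (b i) (b j) with hKdef
  have hK0 : ∀ i, K i i = 0 := by
    intro i
    have := hA1 (b i) (b i) (b i) (b i)
    simp only [hKdef]
    linarith
  have frame : ∀ i j k l : Fin n, i ≠ j → i ≠ k → i ≠ l → j ≠ k → j ≠ l → k ≠ l →
      OrthonormalFrame4 (b i) (b j) (b k) (b l) := by
    intro i j k l h1 h2 h3 h4 h5 h6
    exact ⟨b.orthonormal.1 i, b.orthonormal.1 j, b.orthonormal.1 k, b.orthonormal.1 l,
      b.orthonormal.2 h1, b.orthonormal.2 h2, b.orthonormal.2 h3,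
      b.orthonormal.2 h4, b.orthonormal.2 h5, b.orthonormal.2 h6⟩
  have key : ∀ i j k l : Fin n, i ≠ j → i ≠ k → i ≠ l → j ≠ k → j ≠ l → k ≠ l →
      0 < K i k + K i l + K j k + K j l := by
    intro i j k l h1 h2 h3 h4 h5 h6
    have H1 := hPIC (b i) (b j) (b k) (b l) (frame i j k l h1 h2 h3 h4 h5 h6)
    have H2 := hPIC (b i) (b j) (b l) (b k) (frame i j l k h1 h3 h2 h5 h4 (Ne.symm h6))
    have hA : R (b i) (b j) (b l) (b k) = - R (b i) (b j) (b k) (b l) := by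
      rw [hA2 (b i) (b j) (b k) (b l)]; ring
    simp only [hKdef]
    rw [hA] at H2
    linarith
  set T : ℝ := ∑ i : Fin n, ∑ j : Fin n, ∑ k : Fin n, ∑ l : Fin n,
      (if (i ≠ j ∧ i ≠ k ∧ i ≠ l ∧ j ≠ k ∧ j ≠ l ∧ k ≠ l) then K i k + K i l + K j k + K j l else 0) with hTdef
  have hterm_nonneg : ∀ i j k l : Fin n,
      0 ≤ (if (i ≠ j ∧ i ≠ k ∧ i ≠ l ∧ j ≠ k ∧ j ≠ l ∧ k ≠ l) then K i k + K i l + K j k + K j l else 0) := by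
    intro i j k l
    split_ifs with h
    · exact (key i j k l h.1 h.2.1 h.2.2.1 h.2.2.2.1 h.2.2.2.2.1 h.2.2.2.2.2).le
    · exact le_rfl
  have hi0 : (0:ℕ) < n := by omega
  have hi1 : (1:ℕ) < n := by omega
  have hi2 : (2:ℕ) < n := by omega
  have hi3 : (3:ℕ) < n := by omega
  set i0 : Fin n := ⟨0, hi0⟩
  set i1 : Fin n := ⟨1, hi1⟩
  set i2 : Fin n := ⟨2, hi2⟩
  set i3 : Fin n := ⟨3, hi3⟩
  have hD0 : (i0 ≠ i1 ∧ i0 ≠ i2 ∧ i0 ≠ i3 ∧ i1 ≠ i2 ∧ i1 ≠ i3 ∧ i2 ≠ i3) := by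
    refine ⟨Fin.ne_of_val_ne ?_, Fin.ne_of_val_ne ?_, Fin.ne_of_val_ne ?_,
      Fin.ne_of_val_ne ?_, Fin.ne_of_val_ne ?_, Fin.ne_of_val_ne ?_⟩ <;> norm_num
  have hTpos : 0 < T := by
    rw [hTdef]
    refine Finset.sum_pos' (fun i _ => Finset.sum_nonneg fun j _ => Finset.sum_nonneg
      fun k _ => Finset.sum_nonneg fun l _ => hterm_nonneg i j k l)
      ⟨i0, Finset.mem_univ _, ?_⟩
    refine Finset.sum_pos' (fun j _ => Finset.sum_nonneg fun k _ => Finset.sum_nonneg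
      fun l _ => hterm_nonneg i0 j k l) ⟨i1, Finset.mem_univ _, ?_⟩
    refine Finset.sum_pos' (fun k _ => Finset.sum_nonneg fun l _ => hterm_nonneg i0 i1 k l)
      ⟨i2, Finset.mem_univ _, ?_⟩
    refine Finset.sum_pos' (fun l _ => hterm_nonneg i0 i1 i2 l) ⟨i3, Finset.mem_univ _, ?_⟩
    rw [if_pos hD0]
    exact key i0 i1 i2 i3 hD0.1 hD0.2.1 hD0.2.2.1 hD0.2.2.2.1 hD0.2.2.2.2.1 hD0.2.2.2.2.2
  have ite_split : ∀ (c : Prop) [Decidable c] (x y z w : ℝ),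
      (if c then x + y + z + w else 0)
      = (if c then x else 0) + (if c then y else 0) + (if c then z else 0)
        + (if c then w else 0) := by
    intro c _ x y z w
    split <;> ring
  have hTsplit : T =
      (∑ i : Fin n, ∑ j : Fin n, ∑ k : Fin n, ∑ l : Fin n,
          if (i ≠ j ∧ i ≠ k ∧ i ≠ l ∧ j ≠ k ∧ j ≠ l ∧ k ≠ l) then K i k else 0) + (∑ i : Fin n, ∑ j : Fin n, ∑ k : Fin n, ∑ l : Fin n,
          if (i ≠ j ∧ i ≠ k ∧ i ≠ l ∧ j ≠ k ∧ j ≠ l ∧ k ≠ l) then K i l else 0) + (∑ i : Fin n, ∑ j : Fin n, ∑ k : Fin n, ∑ l : Fin n,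
          if (i ≠ j ∧ i ≠ k ∧ i ≠ l ∧ j ≠ k ∧ j ≠ l ∧ k ≠ l) then K j k else 0) + (∑ i : Fin n, ∑ j : Fin n, ∑ k : Fin n, ∑ l : Fin n,
          if (i ≠ j ∧ i ≠ k ∧ i ≠ l ∧ j ≠ k ∧ j ≠ l ∧ k ≠ l) then K j l else 0) := by
    rw [hTdef]
    simp only [ite_split, Finset.sum_add_distrib]
  set cc : ℝ := (((n-2)*(n-3) : ℕ) : ℝ) with hccdef
  have e1 : (∑ i : Fin n, ∑ j : Fin n, ∑ k : Fin n, ∑ l : Fin n,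
          if (i ≠ j ∧ i ≠ k ∧ i ≠ l ∧ j ≠ k ∧ j ≠ l ∧ k ≠ l) then K i k else 0) = cc * ∑ a : Fin n, ∑ b : Fin n, K a b := by
    calc (∑ i : Fin n, ∑ j : Fin n, ∑ k : Fin n, ∑ l : Fin n,
          if (i ≠ j ∧ i ≠ k ∧ i ≠ l ∧ j ≠ k ∧ j ≠ l ∧ k ≠ l) then K i k else 0)
        _ = ∑ a : Fin n, ∑ c : Fin n, ∑ x : Fin n, ∑ y : Fin n,
          if (a ≠ x ∧ a ≠ c ∧ a ≠ y ∧ x ≠ c ∧ x ≠ y ∧ c ≠ y) then K a c else 0 :=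
          swap23 (fun i j k l => if (i ≠ j ∧ i ≠ k ∧ i ≠ l ∧ j ≠ k ∧ j ≠ l ∧ k ≠ l) then K i k else 0)
        _ = ∑ a : Fin n, ∑ c : Fin n, ∑ x : Fin n, ∑ y : Fin n,
          if a ≠ c ∧ a ≠ x ∧ a ≠ y ∧ c ≠ x ∧ c ≠ y ∧ x ≠ y then K a c else 0 := by
          refine Finset.sum_congr rfl fun a _ => Finset.sum_congr rfl fun c _ =>
            Finset.sum_congr rfl fun x _ => Finset.sum_congr rfl fun y _ => ?_
          refine if_congr ?_ rfl rfl
          constructor <;>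
            (rintro ⟨h1, h2, h3, h4, h5, h6⟩;
             refine ⟨?_, ?_, ?_, ?_, ?_, ?_⟩ <;>
               first | assumption | exact Ne.symm (by assumption))
        _ = cc * ∑ a : Fin n, ∑ b : Fin n, K a b := cnt K hK0
  have e2 : (∑ i : Fin n, ∑ j : Fin n, ∑ k : Fin n, ∑ l : Fin n,
          if (i ≠ j ∧ i ≠ k ∧ i ≠ l ∧ j ≠ k ∧ j ≠ l ∧ k ≠ l) then K i l else 0) = cc * ∑ a : Fin n, ∑ b : Fin n, K a b := by
    calc (∑ i : Fin n, ∑ j : Fin n, ∑ k : Fin n, ∑ l : Fin n,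
          if (i ≠ j ∧ i ≠ k ∧ i ≠ l ∧ j ≠ k ∧ j ≠ l ∧ k ≠ l) then K i l else 0)
        _ = ∑ i : Fin n, ∑ j : Fin n, ∑ l : Fin n, ∑ k : Fin n,
          if (i ≠ j ∧ i ≠ k ∧ i ≠ l ∧ j ≠ k ∧ j ≠ l ∧ k ≠ l) then K i l else 0 :=
          swap34 (fun i j k l => if (i ≠ j ∧ i ≠ k ∧ i ≠ l ∧ j ≠ k ∧ j ≠ l ∧ k ≠ l) then K i l else 0)
        _ = ∑ a : Fin n, ∑ c : Fin n, ∑ x : Fin n, ∑ y : Fin n,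
          if (a ≠ x ∧ a ≠ y ∧ a ≠ c ∧ x ≠ y ∧ x ≠ c ∧ y ≠ c) then K a c else 0 :=
          swap23 (fun p q r s => if (p ≠ q ∧ p ≠ s ∧ p ≠ r ∧ q ≠ s ∧ q ≠ r ∧ s ≠ r) then K p r else 0)
        _ = ∑ a : Fin n, ∑ c : Fin n, ∑ x : Fin n, ∑ y : Fin n,
          if a ≠ c ∧ a ≠ x ∧ a ≠ y ∧ c ≠ x ∧ c ≠ y ∧ x ≠ y then K a c else 0 := by
          refine Finset.sum_congr rfl fun a _ => Finset.sum_congr rfl fun c _ =>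
            Finset.sum_congr rfl fun x _ => Finset.sum_congr rfl fun y _ => ?_
          refine if_congr ?_ rfl rfl
          constructor <;>
            (rintro ⟨h1, h2, h3, h4, h5, h6⟩;
             refine ⟨?_, ?_, ?_, ?_, ?_, ?_⟩ <;>
               first | assumption | exact Ne.symm (by assumption))
        _ = cc * ∑ a : Fin n, ∑ b : Fin n, K a b := cnt K hK0
  have e3 : (∑ i : Fin n, ∑ j : Fin n, ∑ k : Fin n, ∑ l : Fin n,
          if (i ≠ j ∧ i ≠ k ∧ i ≠ l ∧ j ≠ k ∧ j ≠ l ∧ k ≠ l) then K j k else 0) = cc * ∑ a : Fin n, ∑ b : Fin n, K a b := by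
    calc (∑ i : Fin n, ∑ j : Fin n, ∑ k : Fin n, ∑ l : Fin n,
          if (i ≠ j ∧ i ≠ k ∧ i ≠ l ∧ j ≠ k ∧ j ≠ l ∧ k ≠ l) then K j k else 0)
        _ = ∑ j : Fin n, ∑ i : Fin n, ∑ k : Fin n, ∑ l : Fin n,
          if (i ≠ j ∧ i ≠ k ∧ i ≠ l ∧ j ≠ k ∧ j ≠ l ∧ k ≠ l) then K j k else 0 :=
          swap12 (fun i j k l => if (i ≠ j ∧ i ≠ k ∧ i ≠ l ∧ j ≠ k ∧ j ≠ l ∧ k ≠ l) then K j k else 0)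
        _ = ∑ a : Fin n, ∑ c : Fin n, ∑ x : Fin n, ∑ y : Fin n,
          if (x ≠ a ∧ x ≠ c ∧ x ≠ y ∧ a ≠ c ∧ a ≠ y ∧ c ≠ y) then K a c else 0 :=
          swap23 (fun p q r s => if (q ≠ p ∧ q ≠ r ∧ q ≠ s ∧ p ≠ r ∧ p ≠ s ∧ r ≠ s) then K p r else 0)
        _ = ∑ a : Fin n, ∑ c : Fin n, ∑ x : Fin n, ∑ y : Fin n,
          if a ≠ c ∧ a ≠ x ∧ a ≠ y ∧ c ≠ x ∧ c ≠ y ∧ x ≠ y then K a c else 0 := by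
          refine Finset.sum_congr rfl fun a _ => Finset.sum_congr rfl fun c _ =>
            Finset.sum_congr rfl fun x _ => Finset.sum_congr rfl fun y _ => ?_
          refine if_congr ?_ rfl rfl
          constructor <;>
            (rintro ⟨h1, h2, h3, h4, h5, h6⟩;
             refine ⟨?_, ?_, ?_, ?_, ?_, ?_⟩ <;>
               first | assumption | exact Ne.symm (by assumption))
        _ = cc * ∑ a : Fin n, ∑ b : Fin n, K a b := cnt K hK0
  have e4 : (∑ i : Fin n, ∑ j : Fin n, ∑ k : Fin n, ∑ l : Fin n,
          if (i ≠ j ∧ i ≠ k ∧ i ≠ l ∧ j ≠ k ∧ j ≠ l ∧ k ≠ l) then K j l else 0) = cc * ∑ a : Fin n, ∑ b : Fin n, K a b := by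
    calc (∑ i : Fin n, ∑ j : Fin n, ∑ k : Fin n, ∑ l : Fin n,
          if (i ≠ j ∧ i ≠ k ∧ i ≠ l ∧ j ≠ k ∧ j ≠ l ∧ k ≠ l) then K j l else 0)
        _ = ∑ j : Fin n, ∑ i : Fin n, ∑ k : Fin n, ∑ l : Fin n,
          if (i ≠ j ∧ i ≠ k ∧ i ≠ l ∧ j ≠ k ∧ j ≠ l ∧ k ≠ l) then K j l else 0 :=
          swap12 (fun i j k l => if (i ≠ j ∧ i ≠ k ∧ i ≠ l ∧ j ≠ k ∧ j ≠ l ∧ k ≠ l) then K j l else 0)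
        _ = ∑ j : Fin n, ∑ i : Fin n, ∑ l : Fin n, ∑ k : Fin n,
          if (i ≠ j ∧ i ≠ k ∧ i ≠ l ∧ j ≠ k ∧ j ≠ l ∧ k ≠ l) then K j l else 0 :=
          swap34 (fun p q r s => if (q ≠ p ∧ q ≠ r ∧ q ≠ s ∧ p ≠ r ∧ p ≠ s ∧ r ≠ s) then K p s else 0)
        _ = ∑ a : Fin n, ∑ c : Fin n, ∑ x : Fin n, ∑ y : Fin n,
          if (x ≠ a ∧ x ≠ y ∧ x ≠ c ∧ a ≠ y ∧ a ≠ c ∧ y ≠ c) then K a c else 0 :=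
          swap23 (fun p q r s => if (q ≠ p ∧ q ≠ s ∧ q ≠ r ∧ p ≠ s ∧ p ≠ r ∧ s ≠ r) then K p r else 0)
        _ = ∑ a : Fin n, ∑ c : Fin n, ∑ x : Fin n, ∑ y : Fin n,
          if a ≠ c ∧ a ≠ x ∧ a ≠ y ∧ c ≠ x ∧ c ≠ y ∧ x ≠ y then K a c else 0 := by
          refine Finset.sum_congr rfl fun a _ => Finset.sum_congr rfl fun c _ =>
            Finset.sum_congr rfl fun x _ => Finset.sum_congr rfl fun y _ => ?_
          refine if_congr ?_ rfl rfl
          constructor <;>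
            (rintro ⟨h1, h2, h3, h4, h5, h6⟩;
             refine ⟨?_, ?_, ?_, ?_, ?_, ?_⟩ <;>
               first | assumption | exact Ne.symm (by assumption))
        _ = cc * ∑ a : Fin n, ∑ b : Fin n, K a b := cnt K hK0
  have hT : T = 4 * cc * S := by
    rw [hTsplit, e1, e2, e3, e4, hS]
    ring
  have hcpos : (0:ℝ) < cc := by
    rw [hccdef]
    have : 0 < (n-2)*(n-3) := Nat.mul_pos (by omega) (by omega)
    exact_mod_cast this
  by_contra h
  push_neg at h
  have : T ≤ 0 := by
    rw [hT]
    exact mul_nonpos_of_nonneg_of_nonpos (by positivity) h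
  linarith
end

section
/- Let V be a real inner product space of finite dimension n ≥ 4 and let R be an algebraic curvature tensor on V. Suppose that for every orthonormal four-frame {f₁,f₂,f₃,f₄} in V one has R(f₁,f₃,f₁,f₃) + R(f₁,f₄,f₁,f₄) + R(f₂,f₃,f₂,f₃) + R(f₂,f₄,f₂,f₄) > (1/2)·(R(f₁,f₂,f₁,f₂) + R(f₃,f₄,f₃,f₄)). Then for every orthonormal four-frame {e₁,e₂,e₃,e₄} in V one has 4·(R(e₁,e₄,e₁,e₄) + R(e₂,e₃,e₂,e₃)) + 6·R(e₁,e₂,e₄,e₃) + 6·R(e₁,e₃,e₄,e₂) + R(e₁,e₂,e₁,e₂) + R(e₁,e₃,e₁,e₃) + R(e₂,e₄,e₂,e₄) + R(e₃,e₄,e₃,e₄) > 0. -/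
open scoped RealInnerProductSpace

variable {V : Type*} [NormedAddCommGroup V] [InnerProductSpace ℝ V]

/-!
Rotate the planes `span {e₁, e₄}` and `span {e₂, e₃}` by 45° and apply the hypothesis to the
orthonormal frame `f = ((e₁ + e₄)/√2, (e₂ - e₃)/√2, (e₁ - e₄)/√2, (e₂ + e₃)/√2)`. By the
symmetries of `R`, `R(x+y, x-y, x+y, x-y) = 4 R(x,y,x,y)`, and the remaining sectional terms of
`f` expand into a part even in `(e₄, e₃)` and a part odd in `(e₄, e₃)`; with the weights `1` and
`-1/2` of the hypothesis these combine to exactly the claimed expression.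
-/

-- `map_sub` cannot be used in the first slot: instance search does not find the
-- `AddCommGroup` structure on `V →ₗ[ℝ] V →ₗ[ℝ] V →ₗ[ℝ] ℝ`.
theorem LinearMap.apply_sub_left₄ (R : V →ₗ[ℝ] V →ₗ[ℝ] V →ₗ[ℝ] V →ₗ[ℝ] ℝ) (x y Y Z W : V) :
    R (x - y) Y Z W = R x Y Z W - R y Y Z W := by
  rw [sub_eq_add_neg, ← neg_one_smul ℝ y, map_add, map_smul]
  simp only [LinearMap.add_apply, LinearMap.smul_apply, smul_eq_mul]
  ring

theorem LinearMap.apply_smul₄ (R : V →ₗ[ℝ] V →ₗ[ℝ] V →ₗ[ℝ] V →ₗ[ℝ] ℝ) (c : ℝ) (a b : V) :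
    R (c • a) (c • b) (c • a) (c • b) = c ^ 4 * R a b a b := by
  simp only [map_smul, LinearMap.smul_apply, smul_eq_mul]
  ring

namespace IsCurvatureTensor

variable {R : V →ₗ[ℝ] V →ₗ[ℝ] V →ₗ[ℝ] V →ₗ[ℝ] ℝ}

theorem apply_self_left_s18 (hR : IsCurvatureTensor R) (X Z W : V) : R X X Z W = 0 := by
  linarith [hR.1 X X Z W]

theorem apply_self_right_s18 (hR : IsCurvatureTensor R) (X Y Z : V) : R X Y Z Z = 0 := by
  linarith [hR.2.1 X Y Z Z]

theorem apply_swap_swap (hR : IsCurvatureTensor R) (x y : V) : R y x y x = R x y x y := by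
  obtain ⟨hskew₁, hskew₂, -, -⟩ := hR
  rw [hskew₁, hskew₂, neg_neg]

theorem apply_add_sub_self (hR : IsCurvatureTensor R) (x y : V) :
    R (x + y) (x - y) (x + y) (x - y) = 4 * R x y x y := by
  simp only [map_add, map_sub, LinearMap.add_apply, LinearMap.sub_apply, hR.apply_self_left_s18,
    hR.apply_self_right_s18]
  obtain ⟨hskew₁, hskew₂, -, -⟩ := hR
  simp only [hskew₁ y x, hskew₂ _ _ y x]
  ring

theorem apply_sub_add_self (hR : IsCurvatureTensor R) (x y : V) :
    R (x - y) (x + y) (x - y) (x + y) = 4 * R x y x y := by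
  rw [hR.apply_swap_swap, hR.apply_add_sub_self]

theorem apply_add_add_add_apply_sub_sub (hR : IsCurvatureTensor R) (a b c d : V) :
    R (a + b) (c + d) (a + b) (c + d) + R (a - b) (c - d) (a - b) (c - d) =
      2 * (R a c a c + R a d a d + R b c b c + R b d b d) + 4 * (R a c b d + R a d b c) := by
  obtain ⟨-, -, hpair, -⟩ := hR
  simp only [map_add, map_sub, LinearMap.apply_sub_left₄, LinearMap.add_apply,
    LinearMap.sub_apply, hpair b d a c, hpair b c a d]
  ring

theorem apply_add_sub_add_apply_sub_add (hR : IsCurvatureTensor R) (a b c d : V) :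
    R (a + b) (c - d) (a + b) (c - d) + R (a - b) (c + d) (a - b) (c + d) =
      2 * (R a c a c + R a d a d + R b c b c + R b d b d) - 4 * (R a c b d + R a d b c) := by
  obtain ⟨-, -, hpair, -⟩ := hR
  simp only [map_add, map_sub, LinearMap.apply_sub_left₄, LinearMap.add_apply,
    LinearMap.sub_apply, hpair b d a c, hpair b c a d]
  ring

end IsCurvatureTensor

theorem norm_inv_sqrt_two_smul_add {x y : V} (hx : ‖x‖ = 1) (hy : ‖y‖ = 1) (hxy : ⟪x, y⟫ = 0) :
    ‖(√2)⁻¹ • (x + y)‖ = 1 := by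
  have hnorm : ‖x + y‖ = √2 := by
    rw [← Real.sqrt_sq (norm_nonneg _), norm_add_sq_real, hx, hy, hxy]
    norm_num
  rw [norm_smul, hnorm, norm_inv, Real.norm_of_nonneg (Real.sqrt_nonneg 2),
    inv_mul_cancel₀ (by positivity)]

theorem norm_inv_sqrt_two_smul_sub {x y : V} (hx : ‖x‖ = 1) (hy : ‖y‖ = 1) (hxy : ⟪x, y⟫ = 0) :
    ‖(√2)⁻¹ • (x - y)‖ = 1 := by
  rw [sub_eq_add_neg]
  exact norm_inv_sqrt_two_smul_add hx (by rwa [norm_neg]) (by rw [inner_neg_right, hxy, neg_zero])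

theorem OrthonormalFrame4.rotate_s18 {e₁ e₂ e₃ e₄ : V} (h : OrthonormalFrame4 e₁ e₂ e₃ e₄) :
    OrthonormalFrame4 ((√2)⁻¹ • (e₁ + e₄)) ((√2)⁻¹ • (e₂ - e₃)) ((√2)⁻¹ • (e₁ - e₄))
      ((√2)⁻¹ • (e₂ + e₃)) := by
  obtain ⟨h₁, h₂, h₃, h₄, h₁₂, h₁₃, h₁₄, h₂₃, h₂₄, h₃₄⟩ := h
  refine ⟨norm_inv_sqrt_two_smul_add h₁ h₄ h₁₄, norm_inv_sqrt_two_smul_sub h₂ h₃ h₂₃,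
    norm_inv_sqrt_two_smul_sub h₁ h₄ h₁₄, norm_inv_sqrt_two_smul_add h₂ h₃ h₂₃, ?_, ?_, ?_, ?_, ?_,
    ?_⟩ <;>
  simp only [real_inner_smul_left, real_inner_smul_right, inner_add_left, inner_add_right,
    inner_sub_left, inner_sub_right, real_inner_self_eq_norm_sq, real_inner_comm e₁ e₂,
    real_inner_comm e₁ e₃, real_inner_comm e₁ e₄, real_inner_comm e₂ e₃, real_inner_comm e₂ e₄,
    real_inner_comm e₃ e₄, h₁, h₂, h₃, h₄, h₁₂, h₁₃, h₁₄, h₂₃, h₂₄, h₃₄] <;>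
  ring

theorem stmt_18_general {V : Type*} [NormedAddCommGroup V] [InnerProductSpace ℝ V]
    (R : V →ₗ[ℝ] V →ₗ[ℝ] V →ₗ[ℝ] V →ₗ[ℝ] ℝ) (hR : IsCurvatureTensor R)
    (hyp : ∀ f₁ f₂ f₃ f₄ : V, OrthonormalFrame4 f₁ f₂ f₃ f₄ →
      R f₁ f₃ f₁ f₃ + R f₁ f₄ f₁ f₄ + R f₂ f₃ f₂ f₃ + R f₂ f₄ f₂ f₄ >
        (1 / 2) * (R f₁ f₂ f₁ f₂ + R f₃ f₄ f₃ f₄)) :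
    ∀ e₁ e₂ e₃ e₄ : V, OrthonormalFrame4 e₁ e₂ e₃ e₄ →
      4 * (R e₁ e₄ e₁ e₄ + R e₂ e₃ e₂ e₃)
        + 6 * R e₁ e₂ e₄ e₃ + 6 * R e₁ e₃ e₄ e₂
        + R e₁ e₂ e₁ e₂ + R e₁ e₃ e₁ e₃ + R e₂ e₄ e₂ e₄ + R e₃ e₄ e₃ e₄ > 0 := by
  intro e₁ e₂ e₃ e₄ he
  have hrotated := hyp _ _ _ _ he.rotate_s18
  have hc : (√2)⁻¹ ^ 4 = (1 / 4 : ℝ) := by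
    rw [inv_pow, show (4 : ℕ) = 2 * 2 from rfl, pow_mul, Real.sq_sqrt zero_le_two]
    norm_num
  simp only [LinearMap.apply_smul₄, hc, hR.apply_add_sub_self, hR.apply_sub_add_self,
    hR.apply_swap_swap (e₁ - e₄) (e₂ - e₃)] at hrotated
  linarith [hR.apply_add_add_add_apply_sub_sub e₁ e₄ e₂ e₃,
    hR.apply_add_sub_add_apply_sub_add e₁ e₄ e₂ e₃, hR.apply_swap_swap e₂ e₄,
    hR.apply_swap_swap e₃ e₄]

theorem stmt_18 {V : Type*} [NormedAddCommGroup V] [InnerProductSpace ℝ V]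
    [FiniteDimensional ℝ V] (hdim : 4 ≤ Module.finrank ℝ V)
    (R : V →ₗ[ℝ] V →ₗ[ℝ] V →ₗ[ℝ] V →ₗ[ℝ] ℝ) (hR : IsCurvatureTensor R)
    (hyp : ∀ f₁ f₂ f₃ f₄ : V, OrthonormalFrame4 f₁ f₂ f₃ f₄ →
      R f₁ f₃ f₁ f₃ + R f₁ f₄ f₁ f₄ + R f₂ f₃ f₂ f₃ + R f₂ f₄ f₂ f₄ >
        (1 / 2) * (R f₁ f₂ f₁ f₂ + R f₃ f₄ f₃ f₄)) :
    ∀ e₁ e₂ e₃ e₄ : V, OrthonormalFrame4 e₁ e₂ e₃ e₄ →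
      4 * (R e₁ e₄ e₁ e₄ + R e₂ e₃ e₂ e₃)
        + 6 * R e₁ e₂ e₄ e₃ + 6 * R e₁ e₃ e₄ e₂
        + R e₁ e₂ e₁ e₂ + R e₁ e₃ e₁ e₃ + R e₂ e₄ e₂ e₄ + R e₃ e₄ e₃ e₄ > 0 :=
  stmt_18_general R hR hyp
end
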